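/- arXiv:1606.01069 — 5 statements merged into one kernel-verified Lean document; each statement's English description precedes it below -/
import Mathlib

section
/- An endomorphism M of V satisfies Φ₀(Mx, y, z) + Φ₀(x, My, z) + Φ₀(x, y, Mz) = 0 for all x, y, z ∈ V if and only if its matrix in the basis (E₁,…,E₇), written in block form with block row/column sizes (1, 2, 1, 2, 1), equals [ tr A , Z , s , Wᵀ , 0 ; X , A , √2·J·Zᵀ , (s/√2)·J , −W ; r , −√2·Xᵀ·J , 0 , −√2·Z·J , s ; Yᵀ , −(r/√2)·J , √2·J·X , −Aᵀ , −Zᵀ ; 0 , −Y , r , −Xᵀ , −tr A ] for some 2×2 real matrix A, column vectors X, W ∈ ℝ², row vectors Y, Z ∈ M₁ₓ₂(ℝ), and scalars r, s ∈ ℝ, where J := [[0,−1],[1,0]]. In particular, the Lie algebra 𝔤₂ of all such M is 14-dimensional. -/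
noncomputable section

noncomputable section

/-- `V = ℝ⁷` with its standard basis. -/
abbrev V7 : Type := Fin 7 → ℝ

/-- Evaluation of the basis 3-form `eⁱ ∧ eʲ ∧ eᵏ` on `(x, y, z)`: the determinant of the
3×3 matrix of the corresponding coordinates. -/
def tripleDet (i j k : Fin 7) (x y z : V7) : ℝ :=
  x i * (y j * z k - y k * z j) - x j * (y i * z k - y k * z i) + x k * (y i * z j - y j * z i)

/-- The split-generic 3-form `Φ₀ = −e¹∧e⁴∧e⁷ + √2·e¹∧e⁵∧e⁶ + √2·e²∧e³∧e⁷ + e²∧e⁴∧e⁵ + e³∧e⁴∧e⁶`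
(indices here are 0-indexed). -/
def Phi0 (x y z : V7) : ℝ :=
  -(tripleDet 0 3 6 x y z) + Real.sqrt 2 * tripleDet 0 4 5 x y z
    + Real.sqrt 2 * tripleDet 1 2 6 x y z + tripleDet 1 3 4 x y z + tripleDet 2 3 5 x y z

/-- The symmetric bilinear form `H₀` of signature (3,4):
`H₀(E₁,E₇) = H₀(E₂,E₅) = H₀(E₃,E₆) = 1`, `H₀(E₄,E₄) = −1` (1-indexed). -/
def H0 (x y : V7) : ℝ :=
  x 0 * y 6 + x 6 * y 0 + x 1 * y 4 + x 4 * y 1 + x 2 * y 5 + x 5 * y 2 - x 3 * y 3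

lemma Phi0_add_left (a b y z : V7) : Phi0 (a + b) y z = Phi0 a y z + Phi0 b y z := by
  simp only [Phi0, tripleDet, Pi.add_apply]; ring

lemma Phi0_add_middle (x a b z : V7) : Phi0 x (a + b) z = Phi0 x a z + Phi0 x b z := by
  simp only [Phi0, tripleDet, Pi.add_apply]; ring

lemma Phi0_add_right (x y a b : V7) : Phi0 x y (a + b) = Phi0 x y a + Phi0 x y b := by
  simp only [Phi0, tripleDet, Pi.add_apply]; ring

lemma Phi0_smul_left (c : ℝ) (a y z : V7) : Phi0 (c • a) y z = c * Phi0 a y z := by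
  simp only [Phi0, tripleDet, Pi.smul_apply, smul_eq_mul]; ring

lemma Phi0_smul_middle (c : ℝ) (x a z : V7) : Phi0 x (c • a) z = c * Phi0 x a z := by
  simp only [Phi0, tripleDet, Pi.smul_apply, smul_eq_mul]; ring

lemma Phi0_smul_right (c : ℝ) (x y a : V7) : Phi0 x y (c • a) = c * Phi0 x y a := by
  simp only [Phi0, tripleDet, Pi.smul_apply, smul_eq_mul]; ring

/-- The Lie algebra `𝔤₂` of the stabilizer of `Φ₀`: all endomorphisms `M` of `V` with
`Φ₀(Mx,y,z) + Φ₀(x,My,z) + Φ₀(x,y,Mz) = 0`. -/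
def g2 : Submodule ℝ (V7 →ₗ[ℝ] V7) where
  carrier := {M | ∀ x y z : V7, Phi0 (M x) y z + Phi0 x (M y) z + Phi0 x y (M z) = 0}
  add_mem' := by
    intro M N hM hN x y z
    simp only [LinearMap.add_apply, Phi0_add_left, Phi0_add_middle, Phi0_add_right]
    linarith [hM x y z, hN x y z]
  zero_mem' := by
    intro x y z
    simp [Phi0, tripleDet]
  smul_mem' := by
    intro c M hM x y z
    simp only [LinearMap.smul_apply, Phi0_smul_left, Phi0_smul_middle, Phi0_smul_right]
    linear_combination c * hM x y z

/-- The 7×7 matrix in block form with block sizes (1,2,1,2,1), where `J = [[0,−1],[1,0]]`. -/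
def g2Matrix (A : Matrix (Fin 2) (Fin 2) ℝ) (X W Y Z : Fin 2 → ℝ) (r s : ℝ) :
    Matrix (Fin 7) (Fin 7) ℝ :=
  !![A.trace, Z 0, Z 1, s, W 0, W 1, 0;
     X 0, A 0 0, A 0 1, -(Real.sqrt 2 * Z 1), 0, -(s / Real.sqrt 2), -W 0;
     X 1, A 1 0, A 1 1, Real.sqrt 2 * Z 0, s / Real.sqrt 2, 0, -W 1;
     r, -(Real.sqrt 2 * X 1), Real.sqrt 2 * X 0, 0, -(Real.sqrt 2 * Z 1), Real.sqrt 2 * Z 0, s;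
     Y 0, 0, r / Real.sqrt 2, -(Real.sqrt 2 * X 1), -A 0 0, -A 1 0, -Z 0;
     Y 1, -(r / Real.sqrt 2), 0, Real.sqrt 2 * X 0, -A 0 1, -A 1 1, -Z 1;
     0, -Y 0, -Y 1, r, -X 0, -X 1, -A.trace]

/-!
Reading off the entries of an endomorphism at the 14 positions where `A, X, W, Y, Z, r, s`
sit in `g2Matrix` is injective on `𝔤₂`: evaluated on basis triples, the derivation identity
is a system of 35 sparse linear equations in the entries, and once those 14 entries vanish it
forces all others to vanish. Conversely every `g2Matrix` is a derivation of `Φ₀`, by expanding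
the identity. Hence these 14 coordinates identify `𝔤₂` with `ℝ¹⁴`.
-/

section

open Matrix

theorem toLin'_g2Matrix_mem_g2 (A : Matrix (Fin 2) (Fin 2) ℝ) (X W Y Z : Fin 2 → ℝ)
    (r s : ℝ) : toLin' (g2Matrix A X W Y Z r s) ∈ g2 := by
  intro x y z
  have hdiv : ∀ t : ℝ, t / √2 = t * √2 / 2 := fun t => by
    field_simp; rw [Real.sq_sqrt zero_le_two]
  simp only [toLin'_apply, Phi0, tripleDet, mulVec, dotProduct, Fin.sum_univ_seven, g2Matrix,
    of_apply, cons_val, trace_fin_two, hdiv]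
  -- with `1 / √2` cleared, `√2` occurs to degree at most two
  ring_nf
  simp only [Real.sq_sqrt zero_le_two]
  ring

def g2CoordRow : Fin 14 → Fin 7 := ![1, 1, 2, 2, 1, 2, 0, 0, 4, 5, 0, 0, 3, 0]

def g2CoordCol : Fin 14 → Fin 7 := ![1, 2, 1, 2, 0, 0, 4, 5, 0, 0, 1, 2, 0, 3]

def g2Coords : (V7 →ₗ[ℝ] V7) →ₗ[ℝ] (Fin 14 → ℝ) :=
  LinearMap.pi fun k =>
    entryLinearMap ℝ ℝ (g2CoordRow k) (g2CoordCol k) ∘ₗ LinearMap.toMatrix'.toLinearMap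

def g2MatrixOfCoords (c : Fin 14 → ℝ) : Matrix (Fin 7) (Fin 7) ℝ :=
  g2Matrix !![c 0, c 1; c 2, c 3] ![c 4, c 5] ![c 6, c 7] ![c 8, c 9] ![c 10, c 11] (c 12) (c 13)

theorem g2Coords_toLin'_g2MatrixOfCoords (c : Fin 14 → ℝ) :
    g2Coords (toLin' (g2MatrixOfCoords c)) = c := by
  ext k
  fin_cases k <;> simp [g2Coords, g2MatrixOfCoords, g2CoordRow, g2CoordCol, g2Matrix]

theorem eq_zero_of_toLin'_mem_g2 {m : Matrix (Fin 7) (Fin 7) ℝ} (hm : toLin' m ∈ g2)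
    (hc : ∀ k, m (g2CoordRow k) (g2CoordCol k) = 0) : m = 0 := by
  have H : ∀ a b c : Fin 7, Phi0 (m.col a) (Pi.single b 1) (Pi.single c 1) +
      Phi0 (Pi.single a 1) (m.col b) (Pi.single c 1) +
      Phi0 (Pi.single a 1) (Pi.single b 1) (m.col c) = 0 := fun a b c => by
    simpa only [toLin'_apply, mulVec_single_one] using
      hm (Pi.single a 1) (Pi.single b 1) (Pi.single c 1)
  have h012 := H 0 1 2; have h013 := H 0 1 3; have h014 := H 0 1 4; have h015 := H 0 1 5
  have h016 := H 0 1 6; have h023 := H 0 2 3; have h024 := H 0 2 4; have h025 := H 0 2 5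
  have h026 := H 0 2 6; have h034 := H 0 3 4; have h035 := H 0 3 5; have h036 := H 0 3 6
  have h045 := H 0 4 5; have h046 := H 0 4 6; have h056 := H 0 5 6; have h123 := H 1 2 3
  have h124 := H 1 2 4; have h125 := H 1 2 5; have h126 := H 1 2 6; have h134 := H 1 3 4
  have h135 := H 1 3 5; have h136 := H 1 3 6; have h145 := H 1 4 5; have h146 := H 1 4 6
  have h156 := H 1 5 6; have h234 := H 2 3 4; have h235 := H 2 3 5; have h236 := H 2 3 6
  have h245 := H 2 4 5; have h246 := H 2 4 6; have h256 := H 2 5 6; have h345 := H 3 4 5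
  have h346 := H 3 4 6; have h356 := H 3 5 6; have h456 := H 4 5 6
  clear H hm
  simp only [Phi0, tripleDet, col_apply, Pi.single_apply, Fin.reduceEq, if_true, if_false,
    mul_one, mul_zero, sub_zero, zero_sub, zero_add, add_zero, neg_zero, one_mul, zero_mul,
    Fin.forall_fin_succ, IsEmpty.forall_iff, g2CoordRow, g2CoordCol, cons_val_zero,
    cons_val_succ] at *
  have hsq : √2 * √2 = 2 := Real.mul_self_sqrt zero_le_two
  ext i j
  fin_cases i <;> fin_cases j <;>
    simp only [Fin.reduceFinMk, Fin.zero_eta, Fin.mk_one, Matrix.zero_apply] <;> grind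

theorem eq_zero_of_mem_g2_of_g2Coords_eq_zero {M : V7 →ₗ[ℝ] V7} (hM : M ∈ g2)
    (hc : g2Coords M = 0) : M = 0 := by
  rw [← LinearMap.toMatrix'.map_eq_zero_iff]
  exact eq_zero_of_toLin'_mem_g2 (by rwa [toLin'_toMatrix']) (congrFun hc)

theorem g2Coords_injOn : Set.InjOn g2Coords g2 := fun M hM N hN h =>
  sub_eq_zero.mp <| eq_zero_of_mem_g2_of_g2Coords_eq_zero (sub_mem hM hN) (by simp [h])

theorem mem_g2_iff_exists_g2Matrix (M : V7 →ₗ[ℝ] V7) :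
    M ∈ g2 ↔ ∃ (A : Matrix (Fin 2) (Fin 2) ℝ) (X W Y Z : Fin 2 → ℝ) (r s : ℝ),
      LinearMap.toMatrix' M = g2Matrix A X W Y Z r s := by
  refine ⟨fun hM => ?_, fun ⟨A, X, W, Y, Z, r, s, h⟩ => ?_⟩
  · have hM' : M = toLin' (g2MatrixOfCoords (g2Coords M)) :=
      g2Coords_injOn hM (toLin'_g2Matrix_mem_g2 _ _ _ _ _ _ _)
        (g2Coords_toLin'_g2MatrixOfCoords _).symm
    exact ⟨_, _, _, _, _, _, _, by rw [hM', LinearMap.toMatrix'_toLin']; rfl⟩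
  · simpa [← h] using toLin'_g2Matrix_mem_g2 A X W Y Z r s

theorem finrank_g2 : Module.finrank ℝ g2 = 14 := by
  have hbij : Function.Bijective (g2Coords.domRestrict g2) :=
    ⟨fun M N h => Subtype.ext (g2Coords_injOn M.2 N.2 h),
      fun c => ⟨⟨_, toLin'_g2Matrix_mem_g2 _ _ _ _ _ _ _⟩,
        g2Coords_toLin'_g2MatrixOfCoords c⟩⟩
  simpa using (LinearEquiv.ofBijective _ hbij).finrank_eq

end

/-- An endomorphism `M` of `V` satisfies the `𝔤₂` derivation identity for `Φ₀` iff its matrix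
in the standard basis has the indicated block form; in particular `𝔤₂` is 14-dimensional. -/
theorem g2_matrix_characterization :
    (∀ M : V7 →ₗ[ℝ] V7,
      (∀ x y z : V7, Phi0 (M x) y z + Phi0 x (M y) z + Phi0 x y (M z) = 0) ↔
      ∃ (A : Matrix (Fin 2) (Fin 2) ℝ) (X W Y Z : Fin 2 → ℝ) (r s : ℝ),
        LinearMap.toMatrix' M = g2Matrix A X W Y Z r s) ∧
    Module.finrank ℝ g2 = 14 :=
  ⟨mem_g2_iff_exists_g2Matrix, finrank_g2⟩

end
end
end

section
/- For every S ∈ V, the endomorphism K_S satisfies K_S ∘ K_S = ε·id_V + S ⊗ S♭, where ε := −H₀(S,S); that is, K_S(K_S(x)) = ε·x + H₀(S,x)·S for all x ∈ V. -/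
noncomputable section

noncomputable section

/-- For `S ∈ V`, the endomorphism `K_S` determined by `H₀(K_S x, y) = Φ₀(S, x, y)` (the
cross-product map `x ↦ S × x`) satisfies `K_S ∘ K_S = ε·id + S ⊗ S♭`, where `ε := −H₀(S,S)`:
that is, `K_S(K_S(x)) = ε·x + H₀(S,x)·S` for all `x`. -/
theorem crossMap_sq (S : V7) (K : V7 →ₗ[ℝ] V7)
    (hK : ∀ x y : V7, H0 (K x) y = Phi0 S x y) :
    ∀ x : V7, K (K x) = (-(H0 S S)) • x + (H0 S x) • S := by
  have hs2 : Real.sqrt 2 * Real.sqrt 2 = 2 := Real.mul_self_sqrt (by norm_num)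
  have c0 : ∀ u : V7, K u 0 = S 3 * u 0 - S 0 * u 3 - Real.sqrt 2 * S 2 * u 1 + Real.sqrt 2 * S 1 * u 2 := by
    intro u
    have h := hK u (Pi.single 6 1)
    simp [H0, Phi0, tripleDet, Pi.single_apply] at h
    linear_combination h
  have c1 : ∀ u : V7, K u 1 = -S 3 * u 1 + S 1 * u 3 + Real.sqrt 2 * S 5 * u 0 - Real.sqrt 2 * S 0 * u 5 := by
    intro u
    have h := hK u (Pi.single 4 1)
    simp [H0, Phi0, tripleDet, Pi.single_apply] at h
    linear_combination h
  have c2 : ∀ u : V7, K u 2 = -S 3 * u 2 + S 2 * u 3 - Real.sqrt 2 * S 4 * u 0 + Real.sqrt 2 * S 0 * u 4 := by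
    intro u
    have h := hK u (Pi.single 5 1)
    simp [H0, Phi0, tripleDet, Pi.single_apply] at h
    linear_combination h
  have c3 : ∀ u : V7, K u 3 = S 6 * u 0 - S 5 * u 2 - S 4 * u 1 + S 2 * u 5 + S 1 * u 4 - S 0 * u 6 := by
    intro u
    have h := hK u (Pi.single 3 1)
    simp [H0, Phi0, tripleDet, Pi.single_apply] at h
    linear_combination -h
  have c4 : ∀ u : V7, K u 4 = -S 4 * u 3 + S 3 * u 4 - Real.sqrt 2 * S 6 * u 2 + Real.sqrt 2 * S 2 * u 6 := by
    intro u
    have h := hK u (Pi.single 1 1)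
    simp [H0, Phi0, tripleDet, Pi.single_apply] at h
    linear_combination h
  have c5 : ∀ u : V7, K u 5 = -S 5 * u 3 + S 3 * u 5 + Real.sqrt 2 * S 6 * u 1 - Real.sqrt 2 * S 1 * u 6 := by
    intro u
    have h := hK u (Pi.single 2 1)
    simp [H0, Phi0, tripleDet, Pi.single_apply] at h
    linear_combination h
  have c6 : ∀ u : V7, K u 6 = S 6 * u 3 - S 3 * u 6 - Real.sqrt 2 * S 5 * u 4 + Real.sqrt 2 * S 4 * u 5 := by
    intro u
    have h := hK u (Pi.single 0 1)
    simp [H0, Phi0, tripleDet, Pi.single_apply] at h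
    linear_combination h
  intro x
  funext i
  fin_cases i
  · show K (K x) 0 = (-(H0 S S)) • x 0 + (H0 S x) • S 0
    simp only [c0, c1, c2, c3, c4, c5, c6, Pi.add_apply, Pi.smul_apply, smul_eq_mul, H0]
    linear_combination (-S 2 * S 5 * x 0 - S 1 * S 4 * x 0 + S 0 * S 2 * x 5 + S 0 * S 1 * x 4) * hs2
  · show K (K x) 1 = (-(H0 S S)) • x 1 + (H0 S x) • S 1
    simp only [c0, c1, c2, c3, c4, c5, c6, Pi.add_apply, Pi.smul_apply, smul_eq_mul, H0]
    linear_combination (-S 2 * S 5 * x 1 + S 1 * S 5 * x 2 - S 0 * S 6 * x 1 + S 0 * S 1 * x 6) * hs2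
  · show K (K x) 2 = (-(H0 S S)) • x 2 + (H0 S x) • S 2
    simp only [c0, c1, c2, c3, c4, c5, c6, Pi.add_apply, Pi.smul_apply, smul_eq_mul, H0]
    linear_combination (S 2 * S 4 * x 1 - S 1 * S 4 * x 2 - S 0 * S 6 * x 2 + S 0 * S 2 * x 6) * hs2
  · show K (K x) 3 = (-(H0 S S)) • x 3 + (H0 S x) • S 3
    simp only [c0, c1, c2, c3, c4, c5, c6, Pi.add_apply, Pi.smul_apply, smul_eq_mul, H0]
    ring
  · show K (K x) 4 = (-(H0 S S)) • x 4 + (H0 S x) • S 4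
    simp only [c0, c1, c2, c3, c4, c5, c6, Pi.add_apply, Pi.smul_apply, smul_eq_mul, H0]
    linear_combination (S 4 * S 6 * x 0 - S 2 * S 5 * x 4 + S 2 * S 4 * x 5 - S 0 * S 6 * x 4) * hs2
  · show K (K x) 5 = (-(H0 S S)) • x 5 + (H0 S x) • S 5
    simp only [c0, c1, c2, c3, c4, c5, c6, Pi.add_apply, Pi.smul_apply, smul_eq_mul, H0]
    linear_combination (S 5 * S 6 * x 0 + S 1 * S 5 * x 4 - S 1 * S 4 * x 5 - S 0 * S 6 * x 5) * hs2
  · show K (K x) 6 = (-(H0 S S)) • x 6 + (H0 S x) • S 6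
    simp only [c0, c1, c2, c3, c4, c5, c6, Pi.add_apply, Pi.smul_apply, smul_eq_mul, H0]
    linear_combination (S 5 * S 6 * x 2 + S 4 * S 6 * x 1 - S 2 * S 5 * x 6 - S 1 * S 4 * x 6) * hs2

end
end
end

section
/- Let S ∈ V, ε := −H₀(S,S), and W := {x ∈ V : H₀(S,x) = 0}. Then: K_S(S) = 0; K_S(V) ⊆ W; K_S(K_S(x)) = ε·x for all x ∈ W; H₀(K_S x, y) = −H₀(x, K_S y) for all x, y ∈ V; and H₀(K_S x, K_S y) = −ε·H₀(x, y) for all x, y ∈ W. In particular, for ε = ±1 the pair (H₀|_W, K_S|_W) is an ε-Hermitian structure on the 6-dimensional space W. -/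
/-!
Since `Φ₀` is alternating, `H₀(K_S x, y) = Φ₀(S, x, y)` makes `K_S` skew for `H₀`, kills `S`, and
takes values in `S^⊥`. Nondegeneracy of `H₀` pins `K_S` down to an explicit cross product, for
which `S × (S × x) = H₀(S, x) S − H₀(S, S) x` is a coordinate computation (using `√2² = 2`); this
gives `K_S² = ε` on `W`. When `ε = ±1`, `S` is anisotropic, so `W = S^⊥` is a nondegenerate
hyperplane.
-/

noncomputable section

noncomputable section

/-- The `H₀`-orthogonal complement `W = ⟨S⟩^⊥ = {x ∈ V : H₀(S,x) = 0}`. -/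
def Wperp (S : V7) : Submodule ℝ V7 where
  carrier := {x | H0 S x = 0}
  add_mem' := by
    intro a b ha hb
    simp only [Set.mem_setOf_eq, H0, Pi.add_apply] at *
    linarith
  zero_mem' := by simp [H0]
  smul_mem' := by
    intro c a ha
    simp only [Set.mem_setOf_eq, H0, Pi.smul_apply, smul_eq_mul] at *
    linear_combination c * ha

open Module
open LinearMap (BilinForm)

theorem Module.End.mem_eigenspace_one_sup_neg_one {k M : Type*} [Field k] [NeZero (2 : k)]
    [AddCommGroup M] [Module k M] {K : End k M} {w : M} (hw : K (K w) = w) :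
    w ∈ K.eigenspace 1 ⊔ K.eigenspace (-1) := by
  refine Submodule.mem_sup.2 ⟨(2⁻¹ : k) • (w + K w), ?_, (2⁻¹ : k) • (w - K w), ?_, ?_⟩
  · rw [End.mem_eigenspace_iff, map_smul, map_add, hw, one_smul, add_comm]
  · rw [End.mem_eigenspace_iff, map_smul, map_sub, hw, neg_one_smul, ← smul_neg, neg_sub]
  · rw [← smul_add, add_add_sub_cancel, ← two_smul k, smul_smul, inv_mul_cancel₀ two_ne_zero,
      one_smul]

namespace LinearMap.BilinForm

variable {k M : Type*} [Field k] [AddCommGroup M] [Module k M]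

/-- `a ↦ B a ·` embeds `A` into the dual of `C`. -/
theorem finrank_le_of_isotropic_of_le_sup [FiniteDimensional k M] (B : BilinForm k M)
    {W A C : Submodule k M} (hAW : A ≤ W) (hA : ∀ x ∈ A, ∀ y ∈ A, B x y = 0)
    (hW : W ≤ A ⊔ C) (hB : ∀ x ∈ W, (∀ y ∈ W, B x y = 0) → x = 0) :
    finrank k A ≤ finrank k C := by
  have hinj : Function.Injective (B.compl₁₂ A.subtype C.subtype) := by
    rw [← LinearMap.ker_eq_bot, LinearMap.ker_eq_bot']
    intro a ha
    refine Subtype.ext (hB a (hAW a.2) fun w hw => ?_)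
    obtain ⟨x, hx, c, hc, rfl⟩ := Submodule.mem_sup.1 (hW hw)
    rw [map_add, hA a a.2 x hx, zero_add]
    exact LinearMap.congr_fun ha ⟨c, hc⟩
  calc finrank k A ≤ finrank k (Dual k C) := LinearMap.finrank_le_finrank_of_injective hinj
    _ = finrank k C := Subspace.dual_finrank_eq

theorem apply_eq_zero_of_mem_eigenspace {B : BilinForm k M} {K : End k M}
    (hK : ∀ x y, B (K x) y = -B x (K y)) {a b : k} (hab : a + b ≠ 0) {x y : M}
    (hx : x ∈ K.eigenspace a) (hy : y ∈ K.eigenspace b) : B x y = 0 := by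
  rw [End.mem_eigenspace_iff] at hx hy
  have h := hK x y
  rw [hx, hy, smul_left, smul_right] at h
  have : (a + b) * B x y = 0 := by linear_combination h
  exact (mul_eq_zero.1 this).resolve_left hab

/-- The eigenspaces for `±1` are isotropic and span `W`, so each embeds into the dual of the
other. -/
theorem finrank_eigenspace_one_eq_neg_one [NeZero (2 : k)] [FiniteDimensional k M]
    {B : BilinForm k M} {K : End k M} {W : Submodule k M} (hK : ∀ x y, B (K x) y = -B x (K y))
    (hKW : ∀ x, K x ∈ W) (hKK : ∀ w ∈ W, K (K w) = w)
    (hB : ∀ x ∈ W, (∀ y ∈ W, B x y = 0) → x = 0) :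
    finrank k (K.eigenspace 1) = finrank k (K.eigenspace (-1)) := by
  have hle : ∀ {a : k}, a ≠ 0 → K.eigenspace a ≤ W := fun {a} ha x hx => by
    rw [End.mem_eigenspace_iff] at hx
    simpa [hx, smul_smul, inv_mul_cancel₀ ha] using W.smul_mem a⁻¹ (hKW x)
  have hiso : ∀ a : k, a + a ≠ 0 → ∀ x ∈ K.eigenspace a, ∀ y ∈ K.eigenspace a, B x y = 0 :=
    fun a ha x hx y hy => apply_eq_zero_of_mem_eigenspace hK ha hx hy
  have hsup : W ≤ K.eigenspace 1 ⊔ K.eigenspace (-1) := fun w hw =>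
    End.mem_eigenspace_one_sup_neg_one (hKK w hw)
  have h2 : (1 : k) + 1 ≠ 0 := one_add_one_eq_two (R := k) ▸ two_ne_zero
  exact le_antisymm
    (B.finrank_le_of_isotropic_of_le_sup (hle one_ne_zero) (hiso 1 h2) hsup hB)
    (B.finrank_le_of_isotropic_of_le_sup (hle (neg_ne_zero.2 one_ne_zero))
      (hiso (-1) (by rwa [← neg_add, neg_ne_zero])) (sup_comm (K.eigenspace 1) _ ▸ hsup) hB)

end LinearMap.BilinForm

lemma H0_comm (x y : V7) : H0 x y = H0 y x := by
  simp only [H0]; ring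

def H0Form : BilinForm ℝ V7 :=
  LinearMap.mk₂ ℝ H0 (fun x y z => by simp only [H0, Pi.add_apply]; ring)
    (fun c x y => by simp only [H0, Pi.smul_apply, smul_eq_mul]; ring)
    (fun x y z => by simp only [H0, Pi.add_apply]; ring)
    (fun c x y => by simp only [H0, Pi.smul_apply, smul_eq_mul]; ring)

@[simp]
lemma H0Form_apply (x y : V7) : H0Form x y = H0 x y := rfl

lemma H0Form_isRefl : H0Form.IsRefl := fun x y h => by
  rwa [H0Form_apply, H0_comm, ← H0Form_apply]

def H0Partner (y : V7) : V7 := ![y 6, y 4, y 5, -y 3, y 1, y 2, y 0]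

lemma H0_H0Partner_self (x : V7) : H0 x (H0Partner x) = ∑ i, x i ^ 2 := by
  simp only [H0, H0Partner, Matrix.cons_val, Matrix.cons_val_zero, Matrix.cons_val_one, mul_neg,
    sub_neg_eq_add, Fin.sum_univ_seven]
  ring

lemma eq_zero_of_forall_H0_eq_zero {x : V7} (h : ∀ y, H0 x y = 0) : x = 0 := by
  have hsq : ∑ i, x i ^ 2 = 0 := H0_H0Partner_self x ▸ h _
  funext i
  exact pow_eq_zero_iff two_ne_zero |>.1 <|
    (Finset.sum_eq_zero_iff_of_nonneg fun j _ => sq_nonneg (x j)).1 hsq i (Finset.mem_univ i)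

lemma eq_of_forall_H0_eq {x x' : V7} (h : ∀ y, H0 x y = H0 x' y) : x = x' :=
  sub_eq_zero.1 <| eq_zero_of_forall_H0_eq_zero fun y => by
    rw [← H0Form_apply, LinearMap.map_sub₂, H0Form_apply, H0Form_apply, h, sub_self]

lemma H0Form_nondegenerate : H0Form.Nondegenerate :=
  H0Form_isRefl.nondegenerate_iff_separatingLeft.2 fun _ h => eq_zero_of_forall_H0_eq_zero h

lemma Wperp_eq_ker (S : V7) : Wperp S = LinearMap.ker (H0Form S) := rfl

lemma Wperp_eq_orthogonal (S : V7) : Wperp S = H0Form.orthogonal (ℝ ∙ S) :=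
  (H0Form.orthogonal_span_singleton_eq_toLin_ker S).symm

lemma finrank_Wperp {S : V7} (hS : H0 S S ≠ 0) : finrank ℝ (Wperp S) = 6 := by
  have hf : H0Form S ≠ 0 := fun h => hS (by simpa using LinearMap.congr_fun h S)
  have := Module.Dual.finrank_ker_add_one_of_ne_zero hf
  rw [Module.finrank_fin_fun] at this
  rw [Wperp_eq_ker]
  omega

lemma H0_restrict_Wperp_nondegenerate {S : V7} (hS : H0 S S ≠ 0) :
    ∀ x ∈ Wperp S, (∀ y ∈ Wperp S, H0 x y = 0) → x = 0 := by
  rw [Wperp_eq_orthogonal]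
  intro x hx h
  have := (H0Form.restrict_nondegenerate_orthogonal_spanSingleton H0Form_nondegenerate
    H0Form_isRefl hS).1 ⟨x, hx⟩ fun y => h y y.2
  simpa using congrArg Subtype.val this

lemma Phi0_swap (x y z : V7) : Phi0 x y z = -Phi0 x z y := by
  simp only [Phi0, tripleDet]; ring

lemma Phi0_self_left (x z : V7) : Phi0 x x z = 0 := by
  simp only [Phi0, tripleDet]; ring

def crossMap (S x : V7) : V7 :=
  ![S 3 * x 0 - S 0 * x 3 + √2 * (S 1 * x 2 - S 2 * x 1),
    S 1 * x 3 - S 3 * x 1 + √2 * (S 5 * x 0 - S 0 * x 5),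
    S 2 * x 3 - S 3 * x 2 + √2 * (S 0 * x 4 - S 4 * x 0),
    S 6 * x 0 - S 0 * x 6 + S 1 * x 4 - S 4 * x 1 + S 2 * x 5 - S 5 * x 2,
    S 3 * x 4 - S 4 * x 3 + √2 * (S 2 * x 6 - S 6 * x 2),
    S 3 * x 5 - S 5 * x 3 + √2 * (S 6 * x 1 - S 1 * x 6),
    S 6 * x 3 - S 3 * x 6 + √2 * (S 4 * x 5 - S 5 * x 4)]

lemma H0_crossMap (S x y : V7) : H0 (crossMap S x) y = Phi0 S x y := by
  simp only [H0, crossMap, Matrix.cons_val_zero, Matrix.cons_val, Matrix.cons_val_one, Phi0,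
    tripleDet]
  ring

lemma crossMap_crossMap (S x : V7) : crossMap S (crossMap S x) = H0 S x • S - H0 S S • x := by
  have h2 : √2 ^ 2 = 2 := Real.sq_sqrt zero_le_two
  funext i
  fin_cases i <;>
    simp only [crossMap, Matrix.cons_val_zero, Matrix.cons_val, Matrix.cons_val_one, Fin.zero_eta,
      Fin.mk_one, Fin.reduceFinMk, H0, Pi.sub_apply, Pi.smul_apply, smul_eq_mul] <;>
    ring_nf <;> rw [h2] <;> ring

/-- With `ε := −H₀(S,S)` and `W := {x : H₀(S,x) = 0}`: `K_S(S) = 0`; `K_S(V) ⊆ W`;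
`K_S² = ε·id` on `W`; `K_S` is `H₀`-skew; and `H₀(K_S x, K_S y) = −ε·H₀(x,y)` on `W`.
In particular, for `ε = ±1` the pair `(H₀|_W, K_S|_W)` is an `ε`-Hermitian structure on the
6-dimensional space `W`. -/
theorem crossMap_eps_hermitian (S : V7) (K : V7 →ₗ[ℝ] V7)
    (hK : ∀ x y : V7, H0 (K x) y = Phi0 S x y) :
    K S = 0 ∧
    (∀ x : V7, K x ∈ Wperp S) ∧
    (∀ x ∈ Wperp S, K (K x) = (-(H0 S S)) • x) ∧
    (∀ x y : V7, H0 (K x) y = -(H0 x (K y))) ∧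
    (∀ x ∈ Wperp S, ∀ y ∈ Wperp S, H0 (K x) (K y) = -(-(H0 S S)) * H0 x y) ∧
    ((-(H0 S S) = -1 ∨ -(H0 S S) = 1) →
      Module.finrank ℝ (Wperp S) = 6 ∧
      (∀ x ∈ Wperp S, (∀ y ∈ Wperp S, H0 x y = 0) → x = 0) ∧
      (-(H0 S S) = 1 →
        Module.finrank ℝ (Module.End.eigenspace K 1) =
          Module.finrank ℝ (Module.End.eigenspace K (-1)))) := by
  have hK_eq : ∀ x, K x = crossMap S x := fun x =>
    eq_of_forall_H0_eq fun y => by rw [hK, H0_crossMap]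
  have hKS : K S = 0 := eq_zero_of_forall_H0_eq_zero fun y => by rw [hK, Phi0_self_left]
  have hKW : ∀ x, K x ∈ Wperp S := fun x => show H0 S (K x) = 0 by
    rw [H0_comm, hK, Phi0_swap, Phi0_self_left, neg_zero]
  have hskew : ∀ x y, H0 (K x) y = -H0 x (K y) := fun x y => by
    rw [hK, Phi0_swap, ← hK, H0_comm]
  have hKK : ∀ x ∈ Wperp S, K (K x) = -H0 S S • x := fun x hx => by
    rw [hK_eq, hK_eq, crossMap_crossMap, show H0 S x = 0 from hx, zero_smul, zero_sub, neg_smul]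
  refine ⟨hKS, hKW, hKK, hskew, fun x _ y hy => ?_, fun hε => ?_⟩
  · rw [hskew, hKK y hy, ← H0Form_apply, map_smul, smul_eq_mul, H0Form_apply]
    ring
  have hS : H0 S S ≠ 0 := by rcases hε with h | h <;> linarith
  refine ⟨finrank_Wperp hS, H0_restrict_Wperp_nondegenerate hS, fun h1 => ?_⟩
  exact H0Form.finrank_eigenspace_one_eq_neg_one (W := Wperp S) hskew hKW
    (fun w hw => by rw [hKK w hw, h1, one_smul]) (H0_restrict_Wperp_nondegenerate hS)
end
end
end

section
/- For every S ∈ V the 6-form Φ₀ ∧ Φ_I(S) vanishes identically; and the 6-form Φ₀ ∧ Φ_J(S) vanishes identically if and only if S = 0. -/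
noncomputable section

noncomputable section

/-- Evaluation of the basis 4-form `eⁱ∧eʲ∧eᵏ∧eˡ` on `(a,b,c,d)`: the 4×4 determinant of the
corresponding coordinates (expanded along the first row). -/
def quadDet (i j k l : Fin 7) (a b c d : V7) : ℝ :=
  a i * tripleDet j k l b c d - a j * tripleDet i k l b c d
    + a k * tripleDet i j l b c d - a l * tripleDet i j k b c d

/-- The Hodge star `*₀Φ₀` of `Φ₀`, with respect to `H₀` and the volume form
`ε₀ = −e¹∧⋯∧e⁷` (characterized by `α ∧ *₀ψ = ⟨α,ψ⟩_{H₀}·ε₀` for 3-forms `α`, `ψ`),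
computed explicitly:
`*₀Φ₀ = e¹∧e²∧e⁵∧e⁷ + e¹∧e³∧e⁶∧e⁷ − √2·e¹∧e⁴∧e⁵∧e⁶ − √2·e²∧e³∧e⁴∧e⁷ + e²∧e³∧e⁵∧e⁶`
(1-indexed; 0-indexed below). -/
def starPhi0 (a b c d : V7) : ℝ :=
  quadDet 0 1 4 6 a b c d + quadDet 0 2 5 6 a b c d - Real.sqrt 2 * quadDet 0 3 4 5 a b c d
    - Real.sqrt 2 * quadDet 1 2 3 6 a b c d + quadDet 1 2 4 5 a b c d

/-- `Φ_I(S) := ι_S(S♭ ∧ Φ₀)`, written out pointwise: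
`(S♭∧Φ₀)(S,x,y,z) = H₀(S,S)·Φ₀(x,y,z) − H₀(S,x)·Φ₀(S,y,z) + H₀(S,y)·Φ₀(S,x,z) − H₀(S,z)·Φ₀(S,x,y)`. -/
def PhiI (S x y z : V7) : ℝ :=
  H0 S S * Phi0 x y z - H0 S x * Phi0 S y z + H0 S y * Phi0 S x z - H0 S z * Phi0 S x y

/-- `Φ_J(S) := ι_S(*₀Φ₀)`. -/
def PhiJ (S x y z : V7) : ℝ := starPhi0 S x y z

/-- The wedge product of two (alternating trilinear) 3-forms, evaluated on six vectors:
`(α∧β)(v₀,…,v₅) = (1/(3!·3!))·∑_{σ∈S₆} sgn(σ)·α(v_{σ0},v_{σ1},v_{σ2})·β(v_{σ3},v_{σ4},v_{σ5})`. -/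
def wedge33 (α β : V7 → V7 → V7 → ℝ) (v : Fin 6 → V7) : ℝ :=
  (∑ σ : Equiv.Perm (Fin 6), ((Equiv.Perm.sign σ : ℤ) : ℝ) *
      (α (v (σ 0)) (v (σ 1)) (v (σ 2)) * β (v (σ 3)) (v (σ 4)) (v (σ 5)))) / 36

def D (c : Fin 6 → Fin 7) (v : Fin 6 → V7) : ℝ :=
  (Matrix.of fun k l => v k (c l)).det
lemma D_eq_sum (c : Fin 6 → Fin 7) (v : Fin 6 → V7) :
    D c v = ∑ σ : Equiv.Perm (Fin 6), ((Equiv.Perm.sign σ : ℤ) : ℝ) * ∏ l, v (σ l) (c l) := by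
  rw [D, Matrix.det_apply]
  refine Finset.sum_congr rfl fun σ _ => ?_
  simp [Units.smul_def, zsmul_eq_mul]

def TDf (p : Fin 3 → Fin 7) (x y z : V7) : ℝ := tripleDet (p 0) (p 1) (p 2) x y z

lemma td_sum (p : Fin 3 → Fin 7) (x y z : V7) :
    TDf p x y z = ∑ τ : Equiv.Perm (Fin 3),
      ((Equiv.Perm.sign τ : ℤ) : ℝ) * (x (p (τ 0)) * (y (p (τ 1)) * z (p (τ 2)))) := by
  have : (∑ τ : Equiv.Perm (Fin 3),
      ((Equiv.Perm.sign τ : ℤ) : ℝ) * (x (p (τ 0)) * (y (p (τ 1)) * z (p (τ 2)))))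
      = (Matrix.of fun a b => (![x, y, z] b) (p a)).det := by
    rw [Matrix.det_apply]
    refine (Finset.sum_congr rfl fun τ _ => ?_).symm
    rw [Fin.prod_univ_three]
    simp [Units.smul_def, zsmul_eq_mul]
    ring
  rw [this, Matrix.det_fin_three, TDf, tripleDet]
  simp
  ring

def jn (p q : Fin 3 → Fin 7) : Fin 6 → Fin 7 := fun l => Sum.elim p q (finSumFinEquiv.symm l)
def blk (τ τ' : Equiv.Perm (Fin 3)) : Equiv.Perm (Fin 6) :=
  finSumFinEquiv.permCongr (Equiv.sumCongr τ τ')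

lemma sign_blk (τ τ' : Equiv.Perm (Fin 3)) :
    Equiv.Perm.sign (blk τ τ') = Equiv.Perm.sign τ * Equiv.Perm.sign τ' := by
  rw [blk, Equiv.Perm.sign_permCongr, Equiv.Perm.sign_sumCongr]

lemma jn_blk (p q : Fin 3 → Fin 7) (τ τ' : Equiv.Perm (Fin 3)) :
    (jn p q (blk τ τ' 0) = p (τ 0)) ∧ (jn p q (blk τ τ' 1) = p (τ 1)) ∧
    (jn p q (blk τ τ' 2) = p (τ 2)) ∧ (jn p q (blk τ τ' 3) = q (τ' 0)) ∧
    (jn p q (blk τ τ' 4) = q (τ' 1)) ∧ (jn p q (blk τ τ' 5) = q (τ' 2)) := by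
  have e0 : (@finSumFinEquiv 3 3).symm 0 = Sum.inl (0 : Fin 3) := by decide
  have e1 : (@finSumFinEquiv 3 3).symm 1 = Sum.inl (1 : Fin 3) := by decide
  have e2 : (@finSumFinEquiv 3 3).symm 2 = Sum.inl (2 : Fin 3) := by decide
  have e3 : (@finSumFinEquiv 3 3).symm 3 = Sum.inr (0 : Fin 3) := by decide
  have e4 : (@finSumFinEquiv 3 3).symm 4 = Sum.inr (1 : Fin 3) := by decide
  have e5 : (@finSumFinEquiv 3 3).symm 5 = Sum.inr (2 : Fin 3) := by decide
  refine ⟨?_, ?_, ?_, ?_, ?_, ?_⟩ <;>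
    simp only [blk, jn, Equiv.permCongr_apply, Equiv.sumCongr_apply, e0, e1, e2, e3, e4, e5,
      Sum.map_inl, Sum.map_inr, Equiv.symm_apply_apply, Sum.elim_inl, Sum.elim_inr]

lemma sum_reindex (c : Fin 6 → Fin 7) (ρ : Equiv.Perm (Fin 6)) (v : Fin 6 → V7) :
    ∑ σ : Equiv.Perm (Fin 6), ((Equiv.Perm.sign σ : ℤ) : ℝ) * ∏ l, v (σ l) (c (ρ l))
      = ((Equiv.Perm.sign ρ : ℤ) : ℝ) * D c v := by
  have step1 : ∀ σ : Equiv.Perm (Fin 6),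
      (∏ l, v (σ l) (c (ρ l))) = ∏ m, v ((σ * ρ⁻¹) m) (c m) := by
    intro σ
    apply Fintype.prod_equiv ρ
    intro l
    simp [Equiv.Perm.mul_apply]
  rw [Finset.sum_congr rfl (fun σ _ => by rw [step1 σ])]
  rw [D_eq_sum, Finset.mul_sum]
  apply Fintype.sum_equiv (Equiv.mulRight ρ).symm
  intro σ
  simp only [Equiv.mulRight_symm, Equiv.coe_mulRight]
  have hsgn : ((Equiv.Perm.sign (σ * ρ⁻¹) : ℤ) : ℝ)
      = ((Equiv.Perm.sign σ : ℤ) : ℝ) * ((Equiv.Perm.sign ρ⁻¹ : ℤ) : ℝ) := by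
    rw [Equiv.Perm.sign_mul]; push_cast; ring
  rw [hsgn, Equiv.Perm.sign_inv]
  set P := ∏ m, v ((σ * ρ⁻¹) m) (c m) with hP
  have h2 : ((Equiv.Perm.sign ρ : ℤ) : ℝ) * ((Equiv.Perm.sign ρ : ℤ) : ℝ) = 1 := by
    have h := Int.units_mul_self (Equiv.Perm.sign ρ)
    have h' : ((Equiv.Perm.sign ρ * Equiv.Perm.sign ρ : ℤˣ) : ℤ) = 1 := by rw [h]; rfl
    push_cast at h'
    exact_mod_cast h'
  linear_combination (-(((Equiv.Perm.sign σ : ℤ) : ℝ)) * P) * h2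

lemma sign_cast_sq {α : Type*} [DecidableEq α] [Fintype α] (ρ : Equiv.Perm α) :
    ((Equiv.Perm.sign ρ : ℤ) : ℝ) * ((Equiv.Perm.sign ρ : ℤ) : ℝ) = 1 := by
  have h := Int.units_mul_self (Equiv.Perm.sign ρ)
  have h' : ((Equiv.Perm.sign ρ * Equiv.Perm.sign ρ : ℤˣ) : ℤ) = 1 := by rw [h]; rfl
  push_cast at h'
  exact_mod_cast h'

lemma N_TD (p q : Fin 3 → Fin 7) (v : Fin 6 → V7) :
    ∑ σ : Equiv.Perm (Fin 6), ((Equiv.Perm.sign σ : ℤ) : ℝ) *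
      (TDf p (v (σ 0)) (v (σ 1)) (v (σ 2)) * TDf q (v (σ 3)) (v (σ 4)) (v (σ 5)))
    = 36 * D (jn p q) v := by
  have key : ∀ σ : Equiv.Perm (Fin 6), ((Equiv.Perm.sign σ : ℤ) : ℝ) *
      (TDf p (v (σ 0)) (v (σ 1)) (v (σ 2)) * TDf q (v (σ 3)) (v (σ 4)) (v (σ 5)))
      = ∑ t : Equiv.Perm (Fin 3) × Equiv.Perm (Fin 3),
          (((Equiv.Perm.sign t.1 : ℤ) : ℝ) * ((Equiv.Perm.sign t.2 : ℤ) : ℝ)) *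
          (((Equiv.Perm.sign σ : ℤ) : ℝ) * ∏ l, v (σ l) (jn p q (blk t.1 t.2 l))) := by
    intro σ
    rw [td_sum p, td_sum q, Finset.sum_mul_sum, Fintype.sum_prod_type]
    rw [Finset.mul_sum]
    refine Finset.sum_congr rfl fun τ _ => ?_
    rw [Finset.mul_sum]
    refine Finset.sum_congr rfl fun τ' _ => ?_
    obtain ⟨e0, e1, e2, e3, e4, e5⟩ := jn_blk p q τ τ'
    rw [Fin.prod_univ_six, e0, e1, e2, e3, e4, e5]
    ring
  rw [Finset.sum_congr rfl (fun σ _ => key σ), Finset.sum_comm]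
  have inner : ∀ t : Equiv.Perm (Fin 3) × Equiv.Perm (Fin 3),
      (∑ σ : Equiv.Perm (Fin 6),
        (((Equiv.Perm.sign t.1 : ℤ) : ℝ) * ((Equiv.Perm.sign t.2 : ℤ) : ℝ)) *
        (((Equiv.Perm.sign σ : ℤ) : ℝ) * ∏ l, v (σ l) (jn p q (blk t.1 t.2 l))))
      = D (jn p q) v := by
    intro t
    rw [← Finset.mul_sum, sum_reindex (jn p q) (blk t.1 t.2) v]
    have hs : ((Equiv.Perm.sign (blk t.1 t.2) : ℤ) : ℝ)
        = ((Equiv.Perm.sign t.1 : ℤ) : ℝ) * ((Equiv.Perm.sign t.2 : ℤ) : ℝ) := by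
      rw [sign_blk]; push_cast; ring
    rw [hs]
    have h1 := sign_cast_sq t.1
    have h2 := sign_cast_sq t.2
    linear_combination (((Equiv.Perm.sign t.2 : ℤ) : ℝ) * ((Equiv.Perm.sign t.2 : ℤ) : ℝ)
      * D (jn p q) v) * h1 + (D (jn p q) v) * h2
  rw [Finset.sum_congr rfl (fun t _ => inner t)]
  rw [Finset.sum_const]
  have : (Finset.univ : Finset (Equiv.Perm (Fin 3) × Equiv.Perm (Fin 3))).card = 36 := by
    simp [Fintype.card_perm]
    decide
  rw [this]
  simp [nsmul_eq_mul]

def N (α β : V7 → V7 → V7 → ℝ) (v : Fin 6 → V7) : ℝ :=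
  ∑ σ : Equiv.Perm (Fin 6), ((Equiv.Perm.sign σ : ℤ) : ℝ) *
      (α (v (σ 0)) (v (σ 1)) (v (σ 2)) * β (v (σ 3)) (v (σ 4)) (v (σ 5)))

def lc (L : List (ℝ × (Fin 3 → Fin 7))) : V7 → V7 → V7 → ℝ :=
  fun x y z => (L.map (fun e => e.1 * TDf e.2 x y z)).sum

lemma N_TD' (p q : Fin 3 → Fin 7) (v : Fin 6 → V7) :
    N (TDf p) (TDf q) v = 36 * D (jn p q) v := N_TD p q v

lemma N_lc_right (α : V7 → V7 → V7 → ℝ) (B : List (ℝ × (Fin 3 → Fin 7))) (v : Fin 6 → V7) :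
    N α (lc B) v = (B.map fun b => b.1 * N α (TDf b.2) v).sum := by
  induction B with
  | nil => simp [N, lc]
  | cons b B ih =>
    have expand : N α (lc (b :: B)) v = b.1 * N α (TDf b.2) v + N α (lc B) v := by
      simp only [N, Finset.mul_sum, ← Finset.sum_add_distrib]
      refine Finset.sum_congr rfl fun σ _ => ?_
      have hc : ∀ x y z, lc (b :: B) x y z = b.1 * TDf b.2 x y z + lc B x y z := by
        intro x y z; simp [lc]
      rw [hc]
      ring
    rw [expand, ih]
    simp

lemma N_lc_TD (A : List (ℝ × (Fin 3 → Fin 7))) (q : Fin 3 → Fin 7) (v : Fin 6 → V7) :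
    N (lc A) (TDf q) v = (A.map fun a => a.1 * (36 * D (jn a.2 q) v)).sum := by
  induction A with
  | nil => simp [N, lc]
  | cons a A ih =>
    have expand : N (lc (a :: A)) (TDf q) v
        = a.1 * N (TDf a.2) (TDf q) v + N (lc A) (TDf q) v := by
      simp only [N, Finset.mul_sum, ← Finset.sum_add_distrib]
      refine Finset.sum_congr rfl fun σ _ => ?_
      have hc : ∀ x y z, lc (a :: A) x y z = a.1 * TDf a.2 x y z + lc A x y z := by
        intro x y z; simp [lc]
      rw [hc]
      ring
    rw [expand, ih, N_TD']
    simp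

lemma N_lc_lc (A B : List (ℝ × (Fin 3 → Fin 7))) (v : Fin 6 → V7) :
    N (lc A) (lc B) v
      = (B.map fun b => b.1 * (A.map fun a => a.1 * (36 * D (jn a.2 b.2) v)).sum).sum := by
  rw [N_lc_right]
  simp only [N_lc_TD]

lemma D_perm (c : Fin 6 → Fin 7) (ρ : Equiv.Perm (Fin 6)) (c' : Fin 6 → Fin 7)
    (h : ∀ l, c' l = c (ρ l)) (s : ℝ) (hs : ((Equiv.Perm.sign ρ : ℤ) : ℝ) = s)
    (v : Fin 6 → V7) : D c' v = s * D c v := by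
  have : (Matrix.of fun k l => v k (c' l)) = (Matrix.of fun k l => v k (c l)).submatrix id ρ := by
    ext k l; simp [h l]
  rw [D, this, Matrix.det_permute', ← hs, D]

lemma D_dup (c : Fin 6 → Fin 7) (i j : Fin 6) (hij : i ≠ j) (h : c i = c j)
    (v : Fin 6 → V7) : D c v = 0 :=
  Matrix.det_zero_of_column_eq hij (fun k => by simp [h])

lemma D_basis_self (c : Fin 6 → Fin 7) (hc : Function.Injective c) :
    D c (fun k => Pi.single (c k) 1) = 1 := by
  have : (Matrix.of fun k l => (Pi.single (c k) (1:ℝ) : V7) (c l)) = 1 := by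
    ext k l
    by_cases h : k = l
    · subst h; simp
    · rw [Matrix.one_apply_ne h]
      simp only [Matrix.of_apply, Pi.single_apply]
      rw [if_neg (fun hh => h (hc hh.symm))]
  rw [D, this, Matrix.det_one]

lemma D_basis_ne (c c' : Fin 6 → Fin 7) (k₀ : Fin 6) (h : ∀ l, c' l ≠ c k₀) :
    D c' (fun k => Pi.single (c k) 1) = 0 := by
  apply Matrix.det_eq_zero_of_row_eq_zero k₀
  intro l
  simp only [Matrix.of_apply, Pi.single_apply]
  rw [if_neg (h l)]

lemma D_perm_pos (c : Fin 6 → Fin 7) (ρ : Equiv.Perm (Fin 6)) (c' : Fin 6 → Fin 7)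
    (h : ∀ l, c' l = c (ρ l)) (hs : Equiv.Perm.sign ρ = 1) (v : Fin 6 → V7) :
    D c' v = D c v := by
  have := D_perm c ρ c' h 1 (by rw [hs]; norm_num) v
  simpa using this

lemma D_perm_neg (c : Fin 6 → Fin 7) (ρ : Equiv.Perm (Fin 6)) (c' : Fin 6 → Fin 7)
    (h : ∀ l, c' l = c (ρ l)) (hs : Equiv.Perm.sign ρ = -1) (v : Fin 6 → V7) :
    D c' v = -D c v := by
  have := D_perm c ρ c' h (-1) (by rw [hs]; norm_num) v
  simpa using this

def A0list : List (ℝ × (Fin 3 → Fin 7)) :=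
  [((-1 : ℝ), ![0,3,6]), (Real.sqrt 2, ![0,4,5]), (Real.sqrt 2, ![1,2,6]),
   ((1 : ℝ), ![1,3,4]), ((1 : ℝ), ![2,3,5])]

def BJlist (S : V7) : List (ℝ × (Fin 3 → Fin 7)) :=
  [((-S 6), ![0,1,4]),
   ((S 4), ![0,1,6]),
   ((-S 6), ![0,2,5]),
   ((S 5), ![0,2,6]),
   ((Real.sqrt 2 * S 5), ![0,3,4]),
   ((-Real.sqrt 2 * S 4), ![0,3,5]),
   ((Real.sqrt 2 * S 3), ![0,4,5]),
   ((-S 1), ![0,4,6]),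
   ((-S 2), ![0,5,6]),
   ((Real.sqrt 2 * S 6), ![1,2,3]),
   ((-S 5), ![1,2,4]),
   ((S 4), ![1,2,5]),
   ((-Real.sqrt 2 * S 3), ![1,2,6]),
   ((Real.sqrt 2 * S 2), ![1,3,6]),
   ((-S 2), ![1,4,5]),
   ((S 0), ![1,4,6]),
   ((-Real.sqrt 2 * S 1), ![2,3,6]),
   ((S 1), ![2,4,5]),
   ((S 0), ![2,5,6]),
   ((-Real.sqrt 2 * S 0), ![3,4,5])]

def BIlist (S : V7) : List (ℝ × (Fin 3 → Fin 7)) :=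
  [((-Real.sqrt 2 * S 6 * S 6), ![0,1,2]),
   ((-2 * S 4 * S 6), ![0,1,3]),
   ((S 3 * S 6 + Real.sqrt 2 * S 4 * S 5), ![0,1,4]),
   ((-Real.sqrt 2 * S 4 * S 4), ![0,1,5]),
   ((S 3 * S 4 + Real.sqrt 2 * S 2 * S 6), ![0,1,6]),
   ((-2 * S 5 * S 6), ![0,2,3]),
   ((Real.sqrt 2 * S 5 * S 5), ![0,2,4]),
   ((S 3 * S 6 - Real.sqrt 2 * S 4 * S 5), ![0,2,5]),
   ((S 3 * S 5 - Real.sqrt 2 * S 1 * S 6), ![0,2,6]),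
   ((-Real.sqrt 2 * S 3 * S 5), ![0,3,4]),
   ((Real.sqrt 2 * S 3 * S 4), ![0,3,5]),
   ((-2 * S 2 * S 5 - 2 * S 1 * S 4), ![0,3,6]),
   ((-Real.sqrt 2 * S 3 * S 3 + Real.sqrt 2 * S 2 * S 5 + Real.sqrt 2 * S 1 * S 4 + Real.sqrt 2 * S 0 * S 6), ![0,4,5]),
   ((S 1 * S 3 - Real.sqrt 2 * S 0 * S 5), ![0,4,6]),
   ((S 2 * S 3 + Real.sqrt 2 * S 0 * S 4), ![0,5,6]),
   ((Real.sqrt 2 * S 3 * S 6), ![1,2,3]),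
   ((-S 3 * S 5 - Real.sqrt 2 * S 1 * S 6), ![1,2,4]),
   ((S 3 * S 4 - Real.sqrt 2 * S 2 * S 6), ![1,2,5]),
   ((-Real.sqrt 2 * S 3 * S 3 + Real.sqrt 2 * S 2 * S 5 + Real.sqrt 2 * S 1 * S 4 + Real.sqrt 2 * S 0 * S 6), ![1,2,6]),
   ((2 * S 2 * S 5 + 2 * S 0 * S 6), ![1,3,4]),
   ((-2 * S 2 * S 4), ![1,3,5]),
   ((Real.sqrt 2 * S 2 * S 3), ![1,3,6]),
   ((S 2 * S 3 - Real.sqrt 2 * S 0 * S 4), ![1,4,5]),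
   ((S 0 * S 3 - Real.sqrt 2 * S 1 * S 2), ![1,4,6]),
   ((-Real.sqrt 2 * S 2 * S 2), ![1,5,6]),
   ((-2 * S 1 * S 5), ![2,3,4]),
   ((2 * S 1 * S 4 + 2 * S 0 * S 6), ![2,3,5]),
   ((-Real.sqrt 2 * S 1 * S 3), ![2,3,6]),
   ((-S 1 * S 3 - Real.sqrt 2 * S 0 * S 5), ![2,4,5]),
   ((Real.sqrt 2 * S 1 * S 1), ![2,4,6]),
   ((S 0 * S 3 + Real.sqrt 2 * S 1 * S 2), ![2,5,6]),
   ((Real.sqrt 2 * S 0 * S 3), ![3,4,5]),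
   ((-2 * S 0 * S 1), ![3,4,6]),
   ((-2 * S 0 * S 2), ![3,5,6]),
   ((-Real.sqrt 2 * S 0 * S 0), ![4,5,6])]

lemma Phi0_eq : Phi0 = lc A0list := by
  funext x y z
  simp only [Phi0, lc, A0list, TDf, List.map_cons, List.map_nil, List.sum_cons, List.sum_nil,
    Matrix.cons_val_zero, Matrix.cons_val_one, Matrix.head_cons, Matrix.cons_val_two,
    Matrix.tail_cons]
  ring

lemma PhiJ_eq (S : V7) : PhiJ S = lc (BJlist S) := by
  funext x y z
  simp only [PhiJ, starPhi0, quadDet, tripleDet, lc, BJlist, TDf, List.map_cons, List.map_nil,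
    List.sum_cons, List.sum_nil, Matrix.cons_val_zero, Matrix.cons_val_one, Matrix.head_cons,
    Matrix.cons_val_two, Matrix.tail_cons]
  ring

lemma PhiI_eq (S : V7) : PhiI S = lc (BIlist S) := by
  funext x y z
  simp only [PhiI, H0, Phi0, tripleDet, lc, BIlist, TDf, List.map_cons, List.map_nil,
    List.sum_cons, List.sum_nil, Matrix.cons_val_zero, Matrix.cons_val_one, Matrix.head_cons,
    Matrix.cons_val_two, Matrix.tail_cons]
  ring

lemma formI (S : V7) (v : Fin 6 → V7) : wedge33 Phi0 (PhiI S) v = 0 := by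
  have hr : Real.sqrt 2 * Real.sqrt 2 = 2 := Real.mul_self_sqrt (by norm_num)
  have hnum : N Phi0 (PhiI S) v = 0 := by
    rw [Phi0_eq, PhiI_eq S, N_lc_lc]
    simp only [List.map_cons, List.map_nil, List.sum_cons, List.sum_nil, A0list, BIlist]
    have hI_0 : D (jn ![0,3,6] ![0,1,2]) v = 0 :=
      D_dup (jn ![0,3,6] ![0,1,2]) 0 3 (by decide) (by decide) v
    have hI_1 : D (jn ![0,3,6] ![0,1,3]) v = 0 :=
      D_dup (jn ![0,3,6] ![0,1,3]) 0 3 (by decide) (by decide) v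
    have hI_2 : D (jn ![0,3,6] ![0,1,4]) v = 0 :=
      D_dup (jn ![0,3,6] ![0,1,4]) 0 3 (by decide) (by decide) v
    have hI_3 : D (jn ![0,3,6] ![0,1,5]) v = 0 :=
      D_dup (jn ![0,3,6] ![0,1,5]) 0 3 (by decide) (by decide) v
    have hI_4 : D (jn ![0,3,6] ![0,1,6]) v = 0 :=
      D_dup (jn ![0,3,6] ![0,1,6]) 0 3 (by decide) (by decide) v
    have hI_5 : D (jn ![0,3,6] ![0,2,3]) v = 0 :=
      D_dup (jn ![0,3,6] ![0,2,3]) 0 3 (by decide) (by decide) v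
    have hI_6 : D (jn ![0,3,6] ![0,2,4]) v = 0 :=
      D_dup (jn ![0,3,6] ![0,2,4]) 0 3 (by decide) (by decide) v
    have hI_7 : D (jn ![0,3,6] ![0,2,5]) v = 0 :=
      D_dup (jn ![0,3,6] ![0,2,5]) 0 3 (by decide) (by decide) v
    have hI_8 : D (jn ![0,3,6] ![0,2,6]) v = 0 :=
      D_dup (jn ![0,3,6] ![0,2,6]) 0 3 (by decide) (by decide) v
    have hI_9 : D (jn ![0,3,6] ![0,3,4]) v = 0 :=
      D_dup (jn ![0,3,6] ![0,3,4]) 0 3 (by decide) (by decide) v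
    have hI_10 : D (jn ![0,3,6] ![0,3,5]) v = 0 :=
      D_dup (jn ![0,3,6] ![0,3,5]) 0 3 (by decide) (by decide) v
    have hI_11 : D (jn ![0,3,6] ![0,3,6]) v = 0 :=
      D_dup (jn ![0,3,6] ![0,3,6]) 0 3 (by decide) (by decide) v
    have hI_12 : D (jn ![0,3,6] ![0,4,5]) v = 0 :=
      D_dup (jn ![0,3,6] ![0,4,5]) 0 3 (by decide) (by decide) v
    have hI_13 : D (jn ![0,3,6] ![0,4,6]) v = 0 :=
      D_dup (jn ![0,3,6] ![0,4,6]) 0 3 (by decide) (by decide) v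
    have hI_14 : D (jn ![0,3,6] ![0,5,6]) v = 0 :=
      D_dup (jn ![0,3,6] ![0,5,6]) 0 3 (by decide) (by decide) v
    have hI_15 : D (jn ![0,3,6] ![1,2,3]) v = 0 :=
      D_dup (jn ![0,3,6] ![1,2,3]) 1 5 (by decide) (by decide) v
    have hI_16 : D (jn ![0,3,6] ![1,2,4]) v = -D (jn ![0,1,2] ![3,4,6]) v :=
      D_perm_neg (jn ![0,1,2] ![3,4,6]) (Equiv.swap (1:Fin 6) 3 * Equiv.swap (2:Fin 6) 5 * Equiv.swap (4:Fin 6) 5 : Equiv.Perm (Fin 6)) _ (by decide) (by decide) v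
    have hI_17 : D (jn ![0,3,6] ![1,2,5]) v = -D (jn ![0,1,2] ![3,5,6]) v :=
      D_perm_neg (jn ![0,1,2] ![3,5,6]) (Equiv.swap (1:Fin 6) 3 * Equiv.swap (2:Fin 6) 5 * Equiv.swap (4:Fin 6) 5 : Equiv.Perm (Fin 6)) _ (by decide) (by decide) v
    have hI_18 : D (jn ![0,3,6] ![1,2,6]) v = 0 :=
      D_dup (jn ![0,3,6] ![1,2,6]) 2 5 (by decide) (by decide) v
    have hI_19 : D (jn ![0,3,6] ![1,3,4]) v = 0 :=
      D_dup (jn ![0,3,6] ![1,3,4]) 1 4 (by decide) (by decide) v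
    have hI_20 : D (jn ![0,3,6] ![1,3,5]) v = 0 :=
      D_dup (jn ![0,3,6] ![1,3,5]) 1 4 (by decide) (by decide) v
    have hI_21 : D (jn ![0,3,6] ![1,3,6]) v = 0 :=
      D_dup (jn ![0,3,6] ![1,3,6]) 1 4 (by decide) (by decide) v
    have hI_22 : D (jn ![0,3,6] ![1,4,5]) v = D (jn ![0,1,3] ![4,5,6]) v :=
      D_perm_pos (jn ![0,1,3] ![4,5,6]) (Equiv.swap (1:Fin 6) 2 * Equiv.swap (2:Fin 6) 5 * Equiv.swap (3:Fin 6) 5 * Equiv.swap (4:Fin 6) 5 : Equiv.Perm (Fin 6)) _ (by decide) (by decide) v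
    have hI_23 : D (jn ![0,3,6] ![1,4,6]) v = 0 :=
      D_dup (jn ![0,3,6] ![1,4,6]) 2 5 (by decide) (by decide) v
    have hI_24 : D (jn ![0,3,6] ![1,5,6]) v = 0 :=
      D_dup (jn ![0,3,6] ![1,5,6]) 2 5 (by decide) (by decide) v
    have hI_25 : D (jn ![0,3,6] ![2,3,4]) v = 0 :=
      D_dup (jn ![0,3,6] ![2,3,4]) 1 4 (by decide) (by decide) v
    have hI_26 : D (jn ![0,3,6] ![2,3,5]) v = 0 :=
      D_dup (jn ![0,3,6] ![2,3,5]) 1 4 (by decide) (by decide) v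
    have hI_27 : D (jn ![0,3,6] ![2,3,6]) v = 0 :=
      D_dup (jn ![0,3,6] ![2,3,6]) 1 4 (by decide) (by decide) v
    have hI_28 : D (jn ![0,3,6] ![2,4,5]) v = D (jn ![0,2,3] ![4,5,6]) v :=
      D_perm_pos (jn ![0,2,3] ![4,5,6]) (Equiv.swap (1:Fin 6) 2 * Equiv.swap (2:Fin 6) 5 * Equiv.swap (3:Fin 6) 5 * Equiv.swap (4:Fin 6) 5 : Equiv.Perm (Fin 6)) _ (by decide) (by decide) v
    have hI_29 : D (jn ![0,3,6] ![2,4,6]) v = 0 :=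
      D_dup (jn ![0,3,6] ![2,4,6]) 2 5 (by decide) (by decide) v
    have hI_30 : D (jn ![0,3,6] ![2,5,6]) v = 0 :=
      D_dup (jn ![0,3,6] ![2,5,6]) 2 5 (by decide) (by decide) v
    have hI_31 : D (jn ![0,3,6] ![3,4,5]) v = 0 :=
      D_dup (jn ![0,3,6] ![3,4,5]) 1 3 (by decide) (by decide) v
    have hI_32 : D (jn ![0,3,6] ![3,4,6]) v = 0 :=
      D_dup (jn ![0,3,6] ![3,4,6]) 1 3 (by decide) (by decide) v
    have hI_33 : D (jn ![0,3,6] ![3,5,6]) v = 0 :=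
      D_dup (jn ![0,3,6] ![3,5,6]) 1 3 (by decide) (by decide) v
    have hI_34 : D (jn ![0,3,6] ![4,5,6]) v = 0 :=
      D_dup (jn ![0,3,6] ![4,5,6]) 2 5 (by decide) (by decide) v
    have hI_35 : D (jn ![0,4,5] ![0,1,2]) v = 0 :=
      D_dup (jn ![0,4,5] ![0,1,2]) 0 3 (by decide) (by decide) v
    have hI_36 : D (jn ![0,4,5] ![0,1,3]) v = 0 :=
      D_dup (jn ![0,4,5] ![0,1,3]) 0 3 (by decide) (by decide) v
    have hI_37 : D (jn ![0,4,5] ![0,1,4]) v = 0 :=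
      D_dup (jn ![0,4,5] ![0,1,4]) 0 3 (by decide) (by decide) v
    have hI_38 : D (jn ![0,4,5] ![0,1,5]) v = 0 :=
      D_dup (jn ![0,4,5] ![0,1,5]) 0 3 (by decide) (by decide) v
    have hI_39 : D (jn ![0,4,5] ![0,1,6]) v = 0 :=
      D_dup (jn ![0,4,5] ![0,1,6]) 0 3 (by decide) (by decide) v
    have hI_40 : D (jn ![0,4,5] ![0,2,3]) v = 0 :=
      D_dup (jn ![0,4,5] ![0,2,3]) 0 3 (by decide) (by decide) v
    have hI_41 : D (jn ![0,4,5] ![0,2,4]) v = 0 :=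
      D_dup (jn ![0,4,5] ![0,2,4]) 0 3 (by decide) (by decide) v
    have hI_42 : D (jn ![0,4,5] ![0,2,5]) v = 0 :=
      D_dup (jn ![0,4,5] ![0,2,5]) 0 3 (by decide) (by decide) v
    have hI_43 : D (jn ![0,4,5] ![0,2,6]) v = 0 :=
      D_dup (jn ![0,4,5] ![0,2,6]) 0 3 (by decide) (by decide) v
    have hI_44 : D (jn ![0,4,5] ![0,3,4]) v = 0 :=
      D_dup (jn ![0,4,5] ![0,3,4]) 0 3 (by decide) (by decide) v
    have hI_45 : D (jn ![0,4,5] ![0,3,5]) v = 0 :=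
      D_dup (jn ![0,4,5] ![0,3,5]) 0 3 (by decide) (by decide) v
    have hI_46 : D (jn ![0,4,5] ![0,3,6]) v = 0 :=
      D_dup (jn ![0,4,5] ![0,3,6]) 0 3 (by decide) (by decide) v
    have hI_47 : D (jn ![0,4,5] ![0,4,5]) v = 0 :=
      D_dup (jn ![0,4,5] ![0,4,5]) 0 3 (by decide) (by decide) v
    have hI_48 : D (jn ![0,4,5] ![0,4,6]) v = 0 :=
      D_dup (jn ![0,4,5] ![0,4,6]) 0 3 (by decide) (by decide) v
    have hI_49 : D (jn ![0,4,5] ![0,5,6]) v = 0 :=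
      D_dup (jn ![0,4,5] ![0,5,6]) 0 3 (by decide) (by decide) v
    have hI_50 : D (jn ![0,4,5] ![1,2,3]) v = D (jn ![0,1,2] ![3,4,5]) v :=
      D_perm_pos (jn ![0,1,2] ![3,4,5]) (Equiv.swap (1:Fin 6) 4 * Equiv.swap (2:Fin 6) 5 * Equiv.swap (3:Fin 6) 4 * Equiv.swap (4:Fin 6) 5 : Equiv.Perm (Fin 6)) _ (by decide) (by decide) v
    have hI_51 : D (jn ![0,4,5] ![1,2,4]) v = 0 :=
      D_dup (jn ![0,4,5] ![1,2,4]) 1 5 (by decide) (by decide) v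
    have hI_52 : D (jn ![0,4,5] ![1,2,5]) v = 0 :=
      D_dup (jn ![0,4,5] ![1,2,5]) 2 5 (by decide) (by decide) v
    have hI_53 : D (jn ![0,4,5] ![1,2,6]) v = D (jn ![0,1,2] ![4,5,6]) v :=
      D_perm_pos (jn ![0,1,2] ![4,5,6]) (Equiv.swap (1:Fin 6) 3 * Equiv.swap (2:Fin 6) 4 : Equiv.Perm (Fin 6)) _ (by decide) (by decide) v
    have hI_54 : D (jn ![0,4,5] ![1,3,4]) v = 0 :=
      D_dup (jn ![0,4,5] ![1,3,4]) 1 5 (by decide) (by decide) v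
    have hI_55 : D (jn ![0,4,5] ![1,3,5]) v = 0 :=
      D_dup (jn ![0,4,5] ![1,3,5]) 2 5 (by decide) (by decide) v
    have hI_56 : D (jn ![0,4,5] ![1,3,6]) v = D (jn ![0,1,3] ![4,5,6]) v :=
      D_perm_pos (jn ![0,1,3] ![4,5,6]) (Equiv.swap (1:Fin 6) 3 * Equiv.swap (2:Fin 6) 4 : Equiv.Perm (Fin 6)) _ (by decide) (by decide) v
    have hI_57 : D (jn ![0,4,5] ![1,4,5]) v = 0 :=
      D_dup (jn ![0,4,5] ![1,4,5]) 1 4 (by decide) (by decide) v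
    have hI_58 : D (jn ![0,4,5] ![1,4,6]) v = 0 :=
      D_dup (jn ![0,4,5] ![1,4,6]) 1 4 (by decide) (by decide) v
    have hI_59 : D (jn ![0,4,5] ![1,5,6]) v = 0 :=
      D_dup (jn ![0,4,5] ![1,5,6]) 2 4 (by decide) (by decide) v
    have hI_60 : D (jn ![0,4,5] ![2,3,4]) v = 0 :=
      D_dup (jn ![0,4,5] ![2,3,4]) 1 5 (by decide) (by decide) v
    have hI_61 : D (jn ![0,4,5] ![2,3,5]) v = 0 :=
      D_dup (jn ![0,4,5] ![2,3,5]) 2 5 (by decide) (by decide) v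
    have hI_62 : D (jn ![0,4,5] ![2,3,6]) v = D (jn ![0,2,3] ![4,5,6]) v :=
      D_perm_pos (jn ![0,2,3] ![4,5,6]) (Equiv.swap (1:Fin 6) 3 * Equiv.swap (2:Fin 6) 4 : Equiv.Perm (Fin 6)) _ (by decide) (by decide) v
    have hI_63 : D (jn ![0,4,5] ![2,4,5]) v = 0 :=
      D_dup (jn ![0,4,5] ![2,4,5]) 1 4 (by decide) (by decide) v
    have hI_64 : D (jn ![0,4,5] ![2,4,6]) v = 0 :=
      D_dup (jn ![0,4,5] ![2,4,6]) 1 4 (by decide) (by decide) v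
    have hI_65 : D (jn ![0,4,5] ![2,5,6]) v = 0 :=
      D_dup (jn ![0,4,5] ![2,5,6]) 2 4 (by decide) (by decide) v
    have hI_66 : D (jn ![0,4,5] ![3,4,5]) v = 0 :=
      D_dup (jn ![0,4,5] ![3,4,5]) 1 4 (by decide) (by decide) v
    have hI_67 : D (jn ![0,4,5] ![3,4,6]) v = 0 :=
      D_dup (jn ![0,4,5] ![3,4,6]) 1 4 (by decide) (by decide) v
    have hI_68 : D (jn ![0,4,5] ![3,5,6]) v = 0 :=
      D_dup (jn ![0,4,5] ![3,5,6]) 2 4 (by decide) (by decide) v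
    have hI_69 : D (jn ![0,4,5] ![4,5,6]) v = 0 :=
      D_dup (jn ![0,4,5] ![4,5,6]) 1 3 (by decide) (by decide) v
    have hI_70 : D (jn ![1,2,6] ![0,1,2]) v = 0 :=
      D_dup (jn ![1,2,6] ![0,1,2]) 0 4 (by decide) (by decide) v
    have hI_71 : D (jn ![1,2,6] ![0,1,3]) v = 0 :=
      D_dup (jn ![1,2,6] ![0,1,3]) 0 4 (by decide) (by decide) v
    have hI_72 : D (jn ![1,2,6] ![0,1,4]) v = 0 :=
      D_dup (jn ![1,2,6] ![0,1,4]) 0 4 (by decide) (by decide) v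
    have hI_73 : D (jn ![1,2,6] ![0,1,5]) v = 0 :=
      D_dup (jn ![1,2,6] ![0,1,5]) 0 4 (by decide) (by decide) v
    have hI_74 : D (jn ![1,2,6] ![0,1,6]) v = 0 :=
      D_dup (jn ![1,2,6] ![0,1,6]) 0 4 (by decide) (by decide) v
    have hI_75 : D (jn ![1,2,6] ![0,2,3]) v = 0 :=
      D_dup (jn ![1,2,6] ![0,2,3]) 1 4 (by decide) (by decide) v
    have hI_76 : D (jn ![1,2,6] ![0,2,4]) v = 0 :=
      D_dup (jn ![1,2,6] ![0,2,4]) 1 4 (by decide) (by decide) v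
    have hI_77 : D (jn ![1,2,6] ![0,2,5]) v = 0 :=
      D_dup (jn ![1,2,6] ![0,2,5]) 1 4 (by decide) (by decide) v
    have hI_78 : D (jn ![1,2,6] ![0,2,6]) v = 0 :=
      D_dup (jn ![1,2,6] ![0,2,6]) 1 4 (by decide) (by decide) v
    have hI_79 : D (jn ![1,2,6] ![0,3,4]) v = -D (jn ![0,1,2] ![3,4,6]) v :=
      D_perm_neg (jn ![0,1,2] ![3,4,6]) (Equiv.swap (0:Fin 6) 1 * Equiv.swap (1:Fin 6) 2 * Equiv.swap (2:Fin 6) 5 * Equiv.swap (3:Fin 6) 5 * Equiv.swap (4:Fin 6) 5 : Equiv.Perm (Fin 6)) _ (by decide) (by decide) v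
    have hI_80 : D (jn ![1,2,6] ![0,3,5]) v = -D (jn ![0,1,2] ![3,5,6]) v :=
      D_perm_neg (jn ![0,1,2] ![3,5,6]) (Equiv.swap (0:Fin 6) 1 * Equiv.swap (1:Fin 6) 2 * Equiv.swap (2:Fin 6) 5 * Equiv.swap (3:Fin 6) 5 * Equiv.swap (4:Fin 6) 5 : Equiv.Perm (Fin 6)) _ (by decide) (by decide) v
    have hI_81 : D (jn ![1,2,6] ![0,3,6]) v = 0 :=
      D_dup (jn ![1,2,6] ![0,3,6]) 2 5 (by decide) (by decide) v
    have hI_82 : D (jn ![1,2,6] ![0,4,5]) v = -D (jn ![0,1,2] ![4,5,6]) v :=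
      D_perm_neg (jn ![0,1,2] ![4,5,6]) (Equiv.swap (0:Fin 6) 1 * Equiv.swap (1:Fin 6) 2 * Equiv.swap (2:Fin 6) 5 * Equiv.swap (3:Fin 6) 5 * Equiv.swap (4:Fin 6) 5 : Equiv.Perm (Fin 6)) _ (by decide) (by decide) v
    have hI_83 : D (jn ![1,2,6] ![0,4,6]) v = 0 :=
      D_dup (jn ![1,2,6] ![0,4,6]) 2 5 (by decide) (by decide) v
    have hI_84 : D (jn ![1,2,6] ![0,5,6]) v = 0 :=
      D_dup (jn ![1,2,6] ![0,5,6]) 2 5 (by decide) (by decide) v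
    have hI_85 : D (jn ![1,2,6] ![1,2,3]) v = 0 :=
      D_dup (jn ![1,2,6] ![1,2,3]) 0 3 (by decide) (by decide) v
    have hI_86 : D (jn ![1,2,6] ![1,2,4]) v = 0 :=
      D_dup (jn ![1,2,6] ![1,2,4]) 0 3 (by decide) (by decide) v
    have hI_87 : D (jn ![1,2,6] ![1,2,5]) v = 0 :=
      D_dup (jn ![1,2,6] ![1,2,5]) 0 3 (by decide) (by decide) v
    have hI_88 : D (jn ![1,2,6] ![1,2,6]) v = 0 :=
      D_dup (jn ![1,2,6] ![1,2,6]) 0 3 (by decide) (by decide) v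
    have hI_89 : D (jn ![1,2,6] ![1,3,4]) v = 0 :=
      D_dup (jn ![1,2,6] ![1,3,4]) 0 3 (by decide) (by decide) v
    have hI_90 : D (jn ![1,2,6] ![1,3,5]) v = 0 :=
      D_dup (jn ![1,2,6] ![1,3,5]) 0 3 (by decide) (by decide) v
    have hI_91 : D (jn ![1,2,6] ![1,3,6]) v = 0 :=
      D_dup (jn ![1,2,6] ![1,3,6]) 0 3 (by decide) (by decide) v
    have hI_92 : D (jn ![1,2,6] ![1,4,5]) v = 0 :=
      D_dup (jn ![1,2,6] ![1,4,5]) 0 3 (by decide) (by decide) v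
    have hI_93 : D (jn ![1,2,6] ![1,4,6]) v = 0 :=
      D_dup (jn ![1,2,6] ![1,4,6]) 0 3 (by decide) (by decide) v
    have hI_94 : D (jn ![1,2,6] ![1,5,6]) v = 0 :=
      D_dup (jn ![1,2,6] ![1,5,6]) 0 3 (by decide) (by decide) v
    have hI_95 : D (jn ![1,2,6] ![2,3,4]) v = 0 :=
      D_dup (jn ![1,2,6] ![2,3,4]) 1 3 (by decide) (by decide) v
    have hI_96 : D (jn ![1,2,6] ![2,3,5]) v = 0 :=
      D_dup (jn ![1,2,6] ![2,3,5]) 1 3 (by decide) (by decide) v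
    have hI_97 : D (jn ![1,2,6] ![2,3,6]) v = 0 :=
      D_dup (jn ![1,2,6] ![2,3,6]) 1 3 (by decide) (by decide) v
    have hI_98 : D (jn ![1,2,6] ![2,4,5]) v = 0 :=
      D_dup (jn ![1,2,6] ![2,4,5]) 1 3 (by decide) (by decide) v
    have hI_99 : D (jn ![1,2,6] ![2,4,6]) v = 0 :=
      D_dup (jn ![1,2,6] ![2,4,6]) 1 3 (by decide) (by decide) v
    have hI_100 : D (jn ![1,2,6] ![2,5,6]) v = 0 :=
      D_dup (jn ![1,2,6] ![2,5,6]) 1 3 (by decide) (by decide) v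
    have hI_101 : D (jn ![1,2,6] ![3,4,5]) v = -D (jn ![1,2,3] ![4,5,6]) v :=
      D_perm_neg (jn ![1,2,3] ![4,5,6]) (Equiv.swap (2:Fin 6) 5 * Equiv.swap (3:Fin 6) 5 * Equiv.swap (4:Fin 6) 5 : Equiv.Perm (Fin 6)) _ (by decide) (by decide) v
    have hI_102 : D (jn ![1,2,6] ![3,4,6]) v = 0 :=
      D_dup (jn ![1,2,6] ![3,4,6]) 2 5 (by decide) (by decide) v
    have hI_103 : D (jn ![1,2,6] ![3,5,6]) v = 0 :=
      D_dup (jn ![1,2,6] ![3,5,6]) 2 5 (by decide) (by decide) v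
    have hI_104 : D (jn ![1,2,6] ![4,5,6]) v = 0 :=
      D_dup (jn ![1,2,6] ![4,5,6]) 2 5 (by decide) (by decide) v
    have hI_105 : D (jn ![1,3,4] ![0,1,2]) v = 0 :=
      D_dup (jn ![1,3,4] ![0,1,2]) 0 4 (by decide) (by decide) v
    have hI_106 : D (jn ![1,3,4] ![0,1,3]) v = 0 :=
      D_dup (jn ![1,3,4] ![0,1,3]) 0 4 (by decide) (by decide) v
    have hI_107 : D (jn ![1,3,4] ![0,1,4]) v = 0 :=
      D_dup (jn ![1,3,4] ![0,1,4]) 0 4 (by decide) (by decide) v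
    have hI_108 : D (jn ![1,3,4] ![0,1,5]) v = 0 :=
      D_dup (jn ![1,3,4] ![0,1,5]) 0 4 (by decide) (by decide) v
    have hI_109 : D (jn ![1,3,4] ![0,1,6]) v = 0 :=
      D_dup (jn ![1,3,4] ![0,1,6]) 0 4 (by decide) (by decide) v
    have hI_110 : D (jn ![1,3,4] ![0,2,3]) v = 0 :=
      D_dup (jn ![1,3,4] ![0,2,3]) 1 5 (by decide) (by decide) v
    have hI_111 : D (jn ![1,3,4] ![0,2,4]) v = 0 :=
      D_dup (jn ![1,3,4] ![0,2,4]) 2 5 (by decide) (by decide) v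
    have hI_112 : D (jn ![1,3,4] ![0,2,5]) v = -D (jn ![0,1,2] ![3,4,5]) v :=
      D_perm_neg (jn ![0,1,2] ![3,4,5]) (Equiv.swap (0:Fin 6) 1 * Equiv.swap (1:Fin 6) 3 * Equiv.swap (2:Fin 6) 4 : Equiv.Perm (Fin 6)) _ (by decide) (by decide) v
    have hI_113 : D (jn ![1,3,4] ![0,2,6]) v = -D (jn ![0,1,2] ![3,4,6]) v :=
      D_perm_neg (jn ![0,1,2] ![3,4,6]) (Equiv.swap (0:Fin 6) 1 * Equiv.swap (1:Fin 6) 3 * Equiv.swap (2:Fin 6) 4 : Equiv.Perm (Fin 6)) _ (by decide) (by decide) v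
    have hI_114 : D (jn ![1,3,4] ![0,3,4]) v = 0 :=
      D_dup (jn ![1,3,4] ![0,3,4]) 1 4 (by decide) (by decide) v
    have hI_115 : D (jn ![1,3,4] ![0,3,5]) v = 0 :=
      D_dup (jn ![1,3,4] ![0,3,5]) 1 4 (by decide) (by decide) v
    have hI_116 : D (jn ![1,3,4] ![0,3,6]) v = 0 :=
      D_dup (jn ![1,3,4] ![0,3,6]) 1 4 (by decide) (by decide) v
    have hI_117 : D (jn ![1,3,4] ![0,4,5]) v = 0 :=
      D_dup (jn ![1,3,4] ![0,4,5]) 2 4 (by decide) (by decide) v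
    have hI_118 : D (jn ![1,3,4] ![0,4,6]) v = 0 :=
      D_dup (jn ![1,3,4] ![0,4,6]) 2 4 (by decide) (by decide) v
    have hI_119 : D (jn ![1,3,4] ![0,5,6]) v = -D (jn ![0,1,3] ![4,5,6]) v :=
      D_perm_neg (jn ![0,1,3] ![4,5,6]) (Equiv.swap (0:Fin 6) 1 * Equiv.swap (1:Fin 6) 2 * Equiv.swap (2:Fin 6) 3 : Equiv.Perm (Fin 6)) _ (by decide) (by decide) v
    have hI_120 : D (jn ![1,3,4] ![1,2,3]) v = 0 :=
      D_dup (jn ![1,3,4] ![1,2,3]) 0 3 (by decide) (by decide) v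
    have hI_121 : D (jn ![1,3,4] ![1,2,4]) v = 0 :=
      D_dup (jn ![1,3,4] ![1,2,4]) 0 3 (by decide) (by decide) v
    have hI_122 : D (jn ![1,3,4] ![1,2,5]) v = 0 :=
      D_dup (jn ![1,3,4] ![1,2,5]) 0 3 (by decide) (by decide) v
    have hI_123 : D (jn ![1,3,4] ![1,2,6]) v = 0 :=
      D_dup (jn ![1,3,4] ![1,2,6]) 0 3 (by decide) (by decide) v
    have hI_124 : D (jn ![1,3,4] ![1,3,4]) v = 0 :=
      D_dup (jn ![1,3,4] ![1,3,4]) 0 3 (by decide) (by decide) v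
    have hI_125 : D (jn ![1,3,4] ![1,3,5]) v = 0 :=
      D_dup (jn ![1,3,4] ![1,3,5]) 0 3 (by decide) (by decide) v
    have hI_126 : D (jn ![1,3,4] ![1,3,6]) v = 0 :=
      D_dup (jn ![1,3,4] ![1,3,6]) 0 3 (by decide) (by decide) v
    have hI_127 : D (jn ![1,3,4] ![1,4,5]) v = 0 :=
      D_dup (jn ![1,3,4] ![1,4,5]) 0 3 (by decide) (by decide) v
    have hI_128 : D (jn ![1,3,4] ![1,4,6]) v = 0 :=
      D_dup (jn ![1,3,4] ![1,4,6]) 0 3 (by decide) (by decide) v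
    have hI_129 : D (jn ![1,3,4] ![1,5,6]) v = 0 :=
      D_dup (jn ![1,3,4] ![1,5,6]) 0 3 (by decide) (by decide) v
    have hI_130 : D (jn ![1,3,4] ![2,3,4]) v = 0 :=
      D_dup (jn ![1,3,4] ![2,3,4]) 1 4 (by decide) (by decide) v
    have hI_131 : D (jn ![1,3,4] ![2,3,5]) v = 0 :=
      D_dup (jn ![1,3,4] ![2,3,5]) 1 4 (by decide) (by decide) v
    have hI_132 : D (jn ![1,3,4] ![2,3,6]) v = 0 :=
      D_dup (jn ![1,3,4] ![2,3,6]) 1 4 (by decide) (by decide) v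
    have hI_133 : D (jn ![1,3,4] ![2,4,5]) v = 0 :=
      D_dup (jn ![1,3,4] ![2,4,5]) 2 4 (by decide) (by decide) v
    have hI_134 : D (jn ![1,3,4] ![2,4,6]) v = 0 :=
      D_dup (jn ![1,3,4] ![2,4,6]) 2 4 (by decide) (by decide) v
    have hI_135 : D (jn ![1,3,4] ![2,5,6]) v = D (jn ![1,2,3] ![4,5,6]) v :=
      D_perm_pos (jn ![1,2,3] ![4,5,6]) (Equiv.swap (1:Fin 6) 2 * Equiv.swap (2:Fin 6) 3 : Equiv.Perm (Fin 6)) _ (by decide) (by decide) v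
    have hI_136 : D (jn ![1,3,4] ![3,4,5]) v = 0 :=
      D_dup (jn ![1,3,4] ![3,4,5]) 1 3 (by decide) (by decide) v
    have hI_137 : D (jn ![1,3,4] ![3,4,6]) v = 0 :=
      D_dup (jn ![1,3,4] ![3,4,6]) 1 3 (by decide) (by decide) v
    have hI_138 : D (jn ![1,3,4] ![3,5,6]) v = 0 :=
      D_dup (jn ![1,3,4] ![3,5,6]) 1 3 (by decide) (by decide) v
    have hI_139 : D (jn ![1,3,4] ![4,5,6]) v = 0 :=
      D_dup (jn ![1,3,4] ![4,5,6]) 2 3 (by decide) (by decide) v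
    have hI_140 : D (jn ![2,3,5] ![0,1,2]) v = 0 :=
      D_dup (jn ![2,3,5] ![0,1,2]) 0 5 (by decide) (by decide) v
    have hI_141 : D (jn ![2,3,5] ![0,1,3]) v = 0 :=
      D_dup (jn ![2,3,5] ![0,1,3]) 1 5 (by decide) (by decide) v
    have hI_142 : D (jn ![2,3,5] ![0,1,4]) v = -D (jn ![0,1,2] ![3,4,5]) v :=
      D_perm_neg (jn ![0,1,2] ![3,4,5]) (Equiv.swap (0:Fin 6) 2 * Equiv.swap (1:Fin 6) 3 * Equiv.swap (2:Fin 6) 5 * Equiv.swap (3:Fin 6) 5 * Equiv.swap (4:Fin 6) 5 : Equiv.Perm (Fin 6)) _ (by decide) (by decide) v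
    have hI_143 : D (jn ![2,3,5] ![0,1,5]) v = 0 :=
      D_dup (jn ![2,3,5] ![0,1,5]) 2 5 (by decide) (by decide) v
    have hI_144 : D (jn ![2,3,5] ![0,1,6]) v = D (jn ![0,1,2] ![3,5,6]) v :=
      D_perm_pos (jn ![0,1,2] ![3,5,6]) (Equiv.swap (0:Fin 6) 2 * Equiv.swap (1:Fin 6) 3 * Equiv.swap (2:Fin 6) 4 * Equiv.swap (3:Fin 6) 4 : Equiv.Perm (Fin 6)) _ (by decide) (by decide) v
    have hI_145 : D (jn ![2,3,5] ![0,2,3]) v = 0 :=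
      D_dup (jn ![2,3,5] ![0,2,3]) 0 4 (by decide) (by decide) v
    have hI_146 : D (jn ![2,3,5] ![0,2,4]) v = 0 :=
      D_dup (jn ![2,3,5] ![0,2,4]) 0 4 (by decide) (by decide) v
    have hI_147 : D (jn ![2,3,5] ![0,2,5]) v = 0 :=
      D_dup (jn ![2,3,5] ![0,2,5]) 0 4 (by decide) (by decide) v
    have hI_148 : D (jn ![2,3,5] ![0,2,6]) v = 0 :=
      D_dup (jn ![2,3,5] ![0,2,6]) 0 4 (by decide) (by decide) v
    have hI_149 : D (jn ![2,3,5] ![0,3,4]) v = 0 :=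
      D_dup (jn ![2,3,5] ![0,3,4]) 1 4 (by decide) (by decide) v
    have hI_150 : D (jn ![2,3,5] ![0,3,5]) v = 0 :=
      D_dup (jn ![2,3,5] ![0,3,5]) 1 4 (by decide) (by decide) v
    have hI_151 : D (jn ![2,3,5] ![0,3,6]) v = 0 :=
      D_dup (jn ![2,3,5] ![0,3,6]) 1 4 (by decide) (by decide) v
    have hI_152 : D (jn ![2,3,5] ![0,4,5]) v = 0 :=
      D_dup (jn ![2,3,5] ![0,4,5]) 2 5 (by decide) (by decide) v
    have hI_153 : D (jn ![2,3,5] ![0,4,6]) v = D (jn ![0,2,3] ![4,5,6]) v :=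
      D_perm_pos (jn ![0,2,3] ![4,5,6]) (Equiv.swap (0:Fin 6) 1 * Equiv.swap (1:Fin 6) 2 * Equiv.swap (2:Fin 6) 4 * Equiv.swap (3:Fin 6) 4 : Equiv.Perm (Fin 6)) _ (by decide) (by decide) v
    have hI_154 : D (jn ![2,3,5] ![0,5,6]) v = 0 :=
      D_dup (jn ![2,3,5] ![0,5,6]) 2 4 (by decide) (by decide) v
    have hI_155 : D (jn ![2,3,5] ![1,2,3]) v = 0 :=
      D_dup (jn ![2,3,5] ![1,2,3]) 0 4 (by decide) (by decide) v
    have hI_156 : D (jn ![2,3,5] ![1,2,4]) v = 0 :=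
      D_dup (jn ![2,3,5] ![1,2,4]) 0 4 (by decide) (by decide) v
    have hI_157 : D (jn ![2,3,5] ![1,2,5]) v = 0 :=
      D_dup (jn ![2,3,5] ![1,2,5]) 0 4 (by decide) (by decide) v
    have hI_158 : D (jn ![2,3,5] ![1,2,6]) v = 0 :=
      D_dup (jn ![2,3,5] ![1,2,6]) 0 4 (by decide) (by decide) v
    have hI_159 : D (jn ![2,3,5] ![1,3,4]) v = 0 :=
      D_dup (jn ![2,3,5] ![1,3,4]) 1 4 (by decide) (by decide) v
    have hI_160 : D (jn ![2,3,5] ![1,3,5]) v = 0 :=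
      D_dup (jn ![2,3,5] ![1,3,5]) 1 4 (by decide) (by decide) v
    have hI_161 : D (jn ![2,3,5] ![1,3,6]) v = 0 :=
      D_dup (jn ![2,3,5] ![1,3,6]) 1 4 (by decide) (by decide) v
    have hI_162 : D (jn ![2,3,5] ![1,4,5]) v = 0 :=
      D_dup (jn ![2,3,5] ![1,4,5]) 2 5 (by decide) (by decide) v
    have hI_163 : D (jn ![2,3,5] ![1,4,6]) v = D (jn ![1,2,3] ![4,5,6]) v :=
      D_perm_pos (jn ![1,2,3] ![4,5,6]) (Equiv.swap (0:Fin 6) 1 * Equiv.swap (1:Fin 6) 2 * Equiv.swap (2:Fin 6) 4 * Equiv.swap (3:Fin 6) 4 : Equiv.Perm (Fin 6)) _ (by decide) (by decide) v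
    have hI_164 : D (jn ![2,3,5] ![1,5,6]) v = 0 :=
      D_dup (jn ![2,3,5] ![1,5,6]) 2 4 (by decide) (by decide) v
    have hI_165 : D (jn ![2,3,5] ![2,3,4]) v = 0 :=
      D_dup (jn ![2,3,5] ![2,3,4]) 0 3 (by decide) (by decide) v
    have hI_166 : D (jn ![2,3,5] ![2,3,5]) v = 0 :=
      D_dup (jn ![2,3,5] ![2,3,5]) 0 3 (by decide) (by decide) v
    have hI_167 : D (jn ![2,3,5] ![2,3,6]) v = 0 :=
      D_dup (jn ![2,3,5] ![2,3,6]) 0 3 (by decide) (by decide) v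
    have hI_168 : D (jn ![2,3,5] ![2,4,5]) v = 0 :=
      D_dup (jn ![2,3,5] ![2,4,5]) 0 3 (by decide) (by decide) v
    have hI_169 : D (jn ![2,3,5] ![2,4,6]) v = 0 :=
      D_dup (jn ![2,3,5] ![2,4,6]) 0 3 (by decide) (by decide) v
    have hI_170 : D (jn ![2,3,5] ![2,5,6]) v = 0 :=
      D_dup (jn ![2,3,5] ![2,5,6]) 0 3 (by decide) (by decide) v
    have hI_171 : D (jn ![2,3,5] ![3,4,5]) v = 0 :=
      D_dup (jn ![2,3,5] ![3,4,5]) 1 3 (by decide) (by decide) v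
    have hI_172 : D (jn ![2,3,5] ![3,4,6]) v = 0 :=
      D_dup (jn ![2,3,5] ![3,4,6]) 1 3 (by decide) (by decide) v
    have hI_173 : D (jn ![2,3,5] ![3,5,6]) v = 0 :=
      D_dup (jn ![2,3,5] ![3,5,6]) 1 3 (by decide) (by decide) v
    have hI_174 : D (jn ![2,3,5] ![4,5,6]) v = 0 :=
      D_dup (jn ![2,3,5] ![4,5,6]) 2 4 (by decide) (by decide) v
    rw [hI_0, hI_1, hI_2, hI_3, hI_4, hI_5, hI_6, hI_7, hI_8, hI_9, hI_10, hI_11, hI_12, hI_13, hI_14, hI_15, hI_16, hI_17, hI_18, hI_19, hI_20, hI_21, hI_22, hI_23, hI_24, hI_25, hI_26, hI_27, hI_28, hI_29, hI_30, hI_31, hI_32, hI_33, hI_34, hI_35, hI_36, hI_37, hI_38, hI_39, hI_40, hI_41, hI_42, hI_43, hI_44, hI_45, hI_46, hI_47, hI_48, hI_49, hI_50, hI_51, hI_52, hI_53, hI_54, hI_55, hI_56, hI_57, hI_58, hI_59, hI_60, hI_61, hI_62, hI_63, hI_64, hI_65, hI_66, hI_67, hI_68, hI_69, hI_70, hI_71,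 hI_72, hI_73, hI_74, hI_75, hI_76, hI_77, hI_78, hI_79, hI_80, hI_81, hI_82, hI_83, hI_84, hI_85, hI_86, hI_87, hI_88, hI_89, hI_90, hI_91, hI_92, hI_93, hI_94, hI_95, hI_96, hI_97, hI_98, hI_99, hI_100, hI_101, hI_102, hI_103, hI_104, hI_105, hI_106, hI_107, hI_108, hI_109, hI_110, hI_111, hI_112, hI_113, hI_114, hI_115, hI_116, hI_117, hI_118, hI_119, hI_120, hI_121, hI_122, hI_123, hI_124, hI_125, hI_126, hI_127, hI_128, hI_129, hI_130, hI_131, hI_132, hI_133, hI_134, hI_135, hI_136, hI_137, hI_138, hI_139, hI_140, hI_141, hI_142, hI_143, hI_144, hI_145, hI_146, hI_147, hI_148, hI_149, hI_150, hI_151, hI_152, hI_153, hI_154, hI_155, hI_156, hI_157, hI_158, hI_159, hI_160, hI_161, hI_162, hI_163, hI_164, hI_165, hI_166, hI_167, hI_168, hI_169, hI_170, hI_171, hI_172, hI_173, hI_174]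
    linear_combination ((36 * S 3 * S 6) * D (jn ![0,1,2] ![3,4,5]) v + (36 * S 3 * S 5) * D (jn ![0,1,2] ![3,4,6]) v + (-36 * S 3 * S 4) * D (jn ![0,1,2] ![3,5,6]) v + (36 * S 2 * S 3) * D (jn ![0,1,3] ![4,5,6]) v + (-36 * S 1 * S 3) * D (jn ![0,2,3] ![4,5,6]) v + (-36 * S 0 * S 3) * D (jn ![1,2,3] ![4,5,6]) v) * hr
  have hw : wedge33 Phi0 (PhiI S) v = N Phi0 (PhiI S) v / 36 := rfl
  rw [hw, hnum]
  norm_num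

lemma formJ (S : V7) (v : Fin 6 → V7) : wedge33 Phi0 (PhiJ S) v =
    (4 : ℝ) * S 6 * D (jn ![0,1,2] ![3,4,5]) v + (-4 : ℝ) * S 5 * D (jn ![0,1,2] ![3,4,6]) v + (4 : ℝ) * S 4 * D (jn ![0,1,2] ![3,5,6]) v + (-4 : ℝ) * S 3 * D (jn ![0,1,2] ![4,5,6]) v + (4 : ℝ) * S 2 * D (jn ![0,1,3] ![4,5,6]) v + (-4 : ℝ) * S 1 * D (jn ![0,2,3] ![4,5,6]) v + (4 : ℝ) * S 0 * D (jn ![1,2,3] ![4,5,6]) v := by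
  have hr : Real.sqrt 2 * Real.sqrt 2 = 2 := Real.mul_self_sqrt (by norm_num)
  have hnum : N Phi0 (PhiJ S) v = 36 * ((4 : ℝ) * S 6 * D (jn ![0,1,2] ![3,4,5]) v + (-4 : ℝ) * S 5 * D (jn ![0,1,2] ![3,4,6]) v + (4 : ℝ) * S 4 * D (jn ![0,1,2] ![3,5,6]) v + (-4 : ℝ) * S 3 * D (jn ![0,1,2] ![4,5,6]) v + (4 : ℝ) * S 2 * D (jn ![0,1,3] ![4,5,6]) v + (-4 : ℝ) * S 1 * D (jn ![0,2,3] ![4,5,6]) v + (4 : ℝ) * S 0 * D (jn ![1,2,3] ![4,5,6]) v) := by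
    rw [Phi0_eq, PhiJ_eq S, N_lc_lc]
    simp only [List.map_cons, List.map_nil, List.sum_cons, List.sum_nil, A0list, BJlist]
    have hJ_0 : D (jn ![0,3,6] ![0,1,4]) v = 0 :=
      D_dup (jn ![0,3,6] ![0,1,4]) 0 3 (by decide) (by decide) v
    have hJ_1 : D (jn ![0,3,6] ![0,1,6]) v = 0 :=
      D_dup (jn ![0,3,6] ![0,1,6]) 0 3 (by decide) (by decide) v
    have hJ_2 : D (jn ![0,3,6] ![0,2,5]) v = 0 :=
      D_dup (jn ![0,3,6] ![0,2,5]) 0 3 (by decide) (by decide) v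
    have hJ_3 : D (jn ![0,3,6] ![0,2,6]) v = 0 :=
      D_dup (jn ![0,3,6] ![0,2,6]) 0 3 (by decide) (by decide) v
    have hJ_4 : D (jn ![0,3,6] ![0,3,4]) v = 0 :=
      D_dup (jn ![0,3,6] ![0,3,4]) 0 3 (by decide) (by decide) v
    have hJ_5 : D (jn ![0,3,6] ![0,3,5]) v = 0 :=
      D_dup (jn ![0,3,6] ![0,3,5]) 0 3 (by decide) (by decide) v
    have hJ_6 : D (jn ![0,3,6] ![0,4,5]) v = 0 :=
      D_dup (jn ![0,3,6] ![0,4,5]) 0 3 (by decide) (by decide) v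
    have hJ_7 : D (jn ![0,3,6] ![0,4,6]) v = 0 :=
      D_dup (jn ![0,3,6] ![0,4,6]) 0 3 (by decide) (by decide) v
    have hJ_8 : D (jn ![0,3,6] ![0,5,6]) v = 0 :=
      D_dup (jn ![0,3,6] ![0,5,6]) 0 3 (by decide) (by decide) v
    have hJ_9 : D (jn ![0,3,6] ![1,2,3]) v = 0 :=
      D_dup (jn ![0,3,6] ![1,2,3]) 1 5 (by decide) (by decide) v
    have hJ_10 : D (jn ![0,3,6] ![1,2,4]) v = -D (jn ![0,1,2] ![3,4,6]) v :=
      D_perm_neg (jn ![0,1,2] ![3,4,6]) (Equiv.swap (1:Fin 6) 3 * Equiv.swap (2:Fin 6) 5 * Equiv.swap (4:Fin 6) 5 : Equiv.Perm (Fin 6)) _ (by decide) (by decide) v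
    have hJ_11 : D (jn ![0,3,6] ![1,2,5]) v = -D (jn ![0,1,2] ![3,5,6]) v :=
      D_perm_neg (jn ![0,1,2] ![3,5,6]) (Equiv.swap (1:Fin 6) 3 * Equiv.swap (2:Fin 6) 5 * Equiv.swap (4:Fin 6) 5 : Equiv.Perm (Fin 6)) _ (by decide) (by decide) v
    have hJ_12 : D (jn ![0,3,6] ![1,2,6]) v = 0 :=
      D_dup (jn ![0,3,6] ![1,2,6]) 2 5 (by decide) (by decide) v
    have hJ_13 : D (jn ![0,3,6] ![1,3,6]) v = 0 :=
      D_dup (jn ![0,3,6] ![1,3,6]) 1 4 (by decide) (by decide) v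
    have hJ_14 : D (jn ![0,3,6] ![1,4,5]) v = D (jn ![0,1,3] ![4,5,6]) v :=
      D_perm_pos (jn ![0,1,3] ![4,5,6]) (Equiv.swap (1:Fin 6) 2 * Equiv.swap (2:Fin 6) 5 * Equiv.swap (3:Fin 6) 5 * Equiv.swap (4:Fin 6) 5 : Equiv.Perm (Fin 6)) _ (by decide) (by decide) v
    have hJ_15 : D (jn ![0,3,6] ![1,4,6]) v = 0 :=
      D_dup (jn ![0,3,6] ![1,4,6]) 2 5 (by decide) (by decide) v
    have hJ_16 : D (jn ![0,3,6] ![2,3,6]) v = 0 :=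
      D_dup (jn ![0,3,6] ![2,3,6]) 1 4 (by decide) (by decide) v
    have hJ_17 : D (jn ![0,3,6] ![2,4,5]) v = D (jn ![0,2,3] ![4,5,6]) v :=
      D_perm_pos (jn ![0,2,3] ![4,5,6]) (Equiv.swap (1:Fin 6) 2 * Equiv.swap (2:Fin 6) 5 * Equiv.swap (3:Fin 6) 5 * Equiv.swap (4:Fin 6) 5 : Equiv.Perm (Fin 6)) _ (by decide) (by decide) v
    have hJ_18 : D (jn ![0,3,6] ![2,5,6]) v = 0 :=
      D_dup (jn ![0,3,6] ![2,5,6]) 2 5 (by decide) (by decide) v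
    have hJ_19 : D (jn ![0,3,6] ![3,4,5]) v = 0 :=
      D_dup (jn ![0,3,6] ![3,4,5]) 1 3 (by decide) (by decide) v
    have hJ_20 : D (jn ![0,4,5] ![0,1,4]) v = 0 :=
      D_dup (jn ![0,4,5] ![0,1,4]) 0 3 (by decide) (by decide) v
    have hJ_21 : D (jn ![0,4,5] ![0,1,6]) v = 0 :=
      D_dup (jn ![0,4,5] ![0,1,6]) 0 3 (by decide) (by decide) v
    have hJ_22 : D (jn ![0,4,5] ![0,2,5]) v = 0 :=
      D_dup (jn ![0,4,5] ![0,2,5]) 0 3 (by decide) (by decide) v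
    have hJ_23 : D (jn ![0,4,5] ![0,2,6]) v = 0 :=
      D_dup (jn ![0,4,5] ![0,2,6]) 0 3 (by decide) (by decide) v
    have hJ_24 : D (jn ![0,4,5] ![0,3,4]) v = 0 :=
      D_dup (jn ![0,4,5] ![0,3,4]) 0 3 (by decide) (by decide) v
    have hJ_25 : D (jn ![0,4,5] ![0,3,5]) v = 0 :=
      D_dup (jn ![0,4,5] ![0,3,5]) 0 3 (by decide) (by decide) v
    have hJ_26 : D (jn ![0,4,5] ![0,4,5]) v = 0 :=
      D_dup (jn ![0,4,5] ![0,4,5]) 0 3 (by decide) (by decide) v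
    have hJ_27 : D (jn ![0,4,5] ![0,4,6]) v = 0 :=
      D_dup (jn ![0,4,5] ![0,4,6]) 0 3 (by decide) (by decide) v
    have hJ_28 : D (jn ![0,4,5] ![0,5,6]) v = 0 :=
      D_dup (jn ![0,4,5] ![0,5,6]) 0 3 (by decide) (by decide) v
    have hJ_29 : D (jn ![0,4,5] ![1,2,3]) v = D (jn ![0,1,2] ![3,4,5]) v :=
      D_perm_pos (jn ![0,1,2] ![3,4,5]) (Equiv.swap (1:Fin 6) 4 * Equiv.swap (2:Fin 6) 5 * Equiv.swap (3:Fin 6) 4 * Equiv.swap (4:Fin 6) 5 : Equiv.Perm (Fin 6)) _ (by decide) (by decide) v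
    have hJ_30 : D (jn ![0,4,5] ![1,2,4]) v = 0 :=
      D_dup (jn ![0,4,5] ![1,2,4]) 1 5 (by decide) (by decide) v
    have hJ_31 : D (jn ![0,4,5] ![1,2,5]) v = 0 :=
      D_dup (jn ![0,4,5] ![1,2,5]) 2 5 (by decide) (by decide) v
    have hJ_32 : D (jn ![0,4,5] ![1,2,6]) v = D (jn ![0,1,2] ![4,5,6]) v :=
      D_perm_pos (jn ![0,1,2] ![4,5,6]) (Equiv.swap (1:Fin 6) 3 * Equiv.swap (2:Fin 6) 4 : Equiv.Perm (Fin 6)) _ (by decide) (by decide) v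
    have hJ_33 : D (jn ![0,4,5] ![1,3,6]) v = D (jn ![0,1,3] ![4,5,6]) v :=
      D_perm_pos (jn ![0,1,3] ![4,5,6]) (Equiv.swap (1:Fin 6) 3 * Equiv.swap (2:Fin 6) 4 : Equiv.Perm (Fin 6)) _ (by decide) (by decide) v
    have hJ_34 : D (jn ![0,4,5] ![1,4,5]) v = 0 :=
      D_dup (jn ![0,4,5] ![1,4,5]) 1 4 (by decide) (by decide) v
    have hJ_35 : D (jn ![0,4,5] ![1,4,6]) v = 0 :=
      D_dup (jn ![0,4,5] ![1,4,6]) 1 4 (by decide) (by decide) v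
    have hJ_36 : D (jn ![0,4,5] ![2,3,6]) v = D (jn ![0,2,3] ![4,5,6]) v :=
      D_perm_pos (jn ![0,2,3] ![4,5,6]) (Equiv.swap (1:Fin 6) 3 * Equiv.swap (2:Fin 6) 4 : Equiv.Perm (Fin 6)) _ (by decide) (by decide) v
    have hJ_37 : D (jn ![0,4,5] ![2,4,5]) v = 0 :=
      D_dup (jn ![0,4,5] ![2,4,5]) 1 4 (by decide) (by decide) v
    have hJ_38 : D (jn ![0,4,5] ![2,5,6]) v = 0 :=
      D_dup (jn ![0,4,5] ![2,5,6]) 2 4 (by decide) (by decide) v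
    have hJ_39 : D (jn ![0,4,5] ![3,4,5]) v = 0 :=
      D_dup (jn ![0,4,5] ![3,4,5]) 1 4 (by decide) (by decide) v
    have hJ_40 : D (jn ![1,2,6] ![0,1,4]) v = 0 :=
      D_dup (jn ![1,2,6] ![0,1,4]) 0 4 (by decide) (by decide) v
    have hJ_41 : D (jn ![1,2,6] ![0,1,6]) v = 0 :=
      D_dup (jn ![1,2,6] ![0,1,6]) 0 4 (by decide) (by decide) v
    have hJ_42 : D (jn ![1,2,6] ![0,2,5]) v = 0 :=
      D_dup (jn ![1,2,6] ![0,2,5]) 1 4 (by decide) (by decide) v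
    have hJ_43 : D (jn ![1,2,6] ![0,2,6]) v = 0 :=
      D_dup (jn ![1,2,6] ![0,2,6]) 1 4 (by decide) (by decide) v
    have hJ_44 : D (jn ![1,2,6] ![0,3,4]) v = -D (jn ![0,1,2] ![3,4,6]) v :=
      D_perm_neg (jn ![0,1,2] ![3,4,6]) (Equiv.swap (0:Fin 6) 1 * Equiv.swap (1:Fin 6) 2 * Equiv.swap (2:Fin 6) 5 * Equiv.swap (3:Fin 6) 5 * Equiv.swap (4:Fin 6) 5 : Equiv.Perm (Fin 6)) _ (by decide) (by decide) v
    have hJ_45 : D (jn ![1,2,6] ![0,3,5]) v = -D (jn ![0,1,2] ![3,5,6]) v :=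
      D_perm_neg (jn ![0,1,2] ![3,5,6]) (Equiv.swap (0:Fin 6) 1 * Equiv.swap (1:Fin 6) 2 * Equiv.swap (2:Fin 6) 5 * Equiv.swap (3:Fin 6) 5 * Equiv.swap (4:Fin 6) 5 : Equiv.Perm (Fin 6)) _ (by decide) (by decide) v
    have hJ_46 : D (jn ![1,2,6] ![0,4,5]) v = -D (jn ![0,1,2] ![4,5,6]) v :=
      D_perm_neg (jn ![0,1,2] ![4,5,6]) (Equiv.swap (0:Fin 6) 1 * Equiv.swap (1:Fin 6) 2 * Equiv.swap (2:Fin 6) 5 * Equiv.swap (3:Fin 6) 5 * Equiv.swap (4:Fin 6) 5 : Equiv.Perm (Fin 6)) _ (by decide) (by decide) v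
    have hJ_47 : D (jn ![1,2,6] ![0,4,6]) v = 0 :=
      D_dup (jn ![1,2,6] ![0,4,6]) 2 5 (by decide) (by decide) v
    have hJ_48 : D (jn ![1,2,6] ![0,5,6]) v = 0 :=
      D_dup (jn ![1,2,6] ![0,5,6]) 2 5 (by decide) (by decide) v
    have hJ_49 : D (jn ![1,2,6] ![1,2,3]) v = 0 :=
      D_dup (jn ![1,2,6] ![1,2,3]) 0 3 (by decide) (by decide) v
    have hJ_50 : D (jn ![1,2,6] ![1,2,4]) v = 0 :=
      D_dup (jn ![1,2,6] ![1,2,4]) 0 3 (by decide) (by decide) v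
    have hJ_51 : D (jn ![1,2,6] ![1,2,5]) v = 0 :=
      D_dup (jn ![1,2,6] ![1,2,5]) 0 3 (by decide) (by decide) v
    have hJ_52 : D (jn ![1,2,6] ![1,2,6]) v = 0 :=
      D_dup (jn ![1,2,6] ![1,2,6]) 0 3 (by decide) (by decide) v
    have hJ_53 : D (jn ![1,2,6] ![1,3,6]) v = 0 :=
      D_dup (jn ![1,2,6] ![1,3,6]) 0 3 (by decide) (by decide) v
    have hJ_54 : D (jn ![1,2,6] ![1,4,5]) v = 0 :=
      D_dup (jn ![1,2,6] ![1,4,5]) 0 3 (by decide) (by decide) v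
    have hJ_55 : D (jn ![1,2,6] ![1,4,6]) v = 0 :=
      D_dup (jn ![1,2,6] ![1,4,6]) 0 3 (by decide) (by decide) v
    have hJ_56 : D (jn ![1,2,6] ![2,3,6]) v = 0 :=
      D_dup (jn ![1,2,6] ![2,3,6]) 1 3 (by decide) (by decide) v
    have hJ_57 : D (jn ![1,2,6] ![2,4,5]) v = 0 :=
      D_dup (jn ![1,2,6] ![2,4,5]) 1 3 (by decide) (by decide) v
    have hJ_58 : D (jn ![1,2,6] ![2,5,6]) v = 0 :=
      D_dup (jn ![1,2,6] ![2,5,6]) 1 3 (by decide) (by decide) v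
    have hJ_59 : D (jn ![1,2,6] ![3,4,5]) v = -D (jn ![1,2,3] ![4,5,6]) v :=
      D_perm_neg (jn ![1,2,3] ![4,5,6]) (Equiv.swap (2:Fin 6) 5 * Equiv.swap (3:Fin 6) 5 * Equiv.swap (4:Fin 6) 5 : Equiv.Perm (Fin 6)) _ (by decide) (by decide) v
    have hJ_60 : D (jn ![1,3,4] ![0,1,4]) v = 0 :=
      D_dup (jn ![1,3,4] ![0,1,4]) 0 4 (by decide) (by decide) v
    have hJ_61 : D (jn ![1,3,4] ![0,1,6]) v = 0 :=
      D_dup (jn ![1,3,4] ![0,1,6]) 0 4 (by decide) (by decide) v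
    have hJ_62 : D (jn ![1,3,4] ![0,2,5]) v = -D (jn ![0,1,2] ![3,4,5]) v :=
      D_perm_neg (jn ![0,1,2] ![3,4,5]) (Equiv.swap (0:Fin 6) 1 * Equiv.swap (1:Fin 6) 3 * Equiv.swap (2:Fin 6) 4 : Equiv.Perm (Fin 6)) _ (by decide) (by decide) v
    have hJ_63 : D (jn ![1,3,4] ![0,2,6]) v = -D (jn ![0,1,2] ![3,4,6]) v :=
      D_perm_neg (jn ![0,1,2] ![3,4,6]) (Equiv.swap (0:Fin 6) 1 * Equiv.swap (1:Fin 6) 3 * Equiv.swap (2:Fin 6) 4 : Equiv.Perm (Fin 6)) _ (by decide) (by decide) v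
    have hJ_64 : D (jn ![1,3,4] ![0,3,4]) v = 0 :=
      D_dup (jn ![1,3,4] ![0,3,4]) 1 4 (by decide) (by decide) v
    have hJ_65 : D (jn ![1,3,4] ![0,3,5]) v = 0 :=
      D_dup (jn ![1,3,4] ![0,3,5]) 1 4 (by decide) (by decide) v
    have hJ_66 : D (jn ![1,3,4] ![0,4,5]) v = 0 :=
      D_dup (jn ![1,3,4] ![0,4,5]) 2 4 (by decide) (by decide) v
    have hJ_67 : D (jn ![1,3,4] ![0,4,6]) v = 0 :=
      D_dup (jn ![1,3,4] ![0,4,6]) 2 4 (by decide) (by decide) v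
    have hJ_68 : D (jn ![1,3,4] ![0,5,6]) v = -D (jn ![0,1,3] ![4,5,6]) v :=
      D_perm_neg (jn ![0,1,3] ![4,5,6]) (Equiv.swap (0:Fin 6) 1 * Equiv.swap (1:Fin 6) 2 * Equiv.swap (2:Fin 6) 3 : Equiv.Perm (Fin 6)) _ (by decide) (by decide) v
    have hJ_69 : D (jn ![1,3,4] ![1,2,3]) v = 0 :=
      D_dup (jn ![1,3,4] ![1,2,3]) 0 3 (by decide) (by decide) v
    have hJ_70 : D (jn ![1,3,4] ![1,2,4]) v = 0 :=
      D_dup (jn ![1,3,4] ![1,2,4]) 0 3 (by decide) (by decide) v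
    have hJ_71 : D (jn ![1,3,4] ![1,2,5]) v = 0 :=
      D_dup (jn ![1,3,4] ![1,2,5]) 0 3 (by decide) (by decide) v
    have hJ_72 : D (jn ![1,3,4] ![1,2,6]) v = 0 :=
      D_dup (jn ![1,3,4] ![1,2,6]) 0 3 (by decide) (by decide) v
    have hJ_73 : D (jn ![1,3,4] ![1,3,6]) v = 0 :=
      D_dup (jn ![1,3,4] ![1,3,6]) 0 3 (by decide) (by decide) v
    have hJ_74 : D (jn ![1,3,4] ![1,4,5]) v = 0 :=
      D_dup (jn ![1,3,4] ![1,4,5]) 0 3 (by decide) (by decide) v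
    have hJ_75 : D (jn ![1,3,4] ![1,4,6]) v = 0 :=
      D_dup (jn ![1,3,4] ![1,4,6]) 0 3 (by decide) (by decide) v
    have hJ_76 : D (jn ![1,3,4] ![2,3,6]) v = 0 :=
      D_dup (jn ![1,3,4] ![2,3,6]) 1 4 (by decide) (by decide) v
    have hJ_77 : D (jn ![1,3,4] ![2,4,5]) v = 0 :=
      D_dup (jn ![1,3,4] ![2,4,5]) 2 4 (by decide) (by decide) v
    have hJ_78 : D (jn ![1,3,4] ![2,5,6]) v = D (jn ![1,2,3] ![4,5,6]) v :=
      D_perm_pos (jn ![1,2,3] ![4,5,6]) (Equiv.swap (1:Fin 6) 2 * Equiv.swap (2:Fin 6) 3 : Equiv.Perm (Fin 6)) _ (by decide) (by decide) v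
    have hJ_79 : D (jn ![1,3,4] ![3,4,5]) v = 0 :=
      D_dup (jn ![1,3,4] ![3,4,5]) 1 3 (by decide) (by decide) v
    have hJ_80 : D (jn ![2,3,5] ![0,1,4]) v = -D (jn ![0,1,2] ![3,4,5]) v :=
      D_perm_neg (jn ![0,1,2] ![3,4,5]) (Equiv.swap (0:Fin 6) 2 * Equiv.swap (1:Fin 6) 3 * Equiv.swap (2:Fin 6) 5 * Equiv.swap (3:Fin 6) 5 * Equiv.swap (4:Fin 6) 5 : Equiv.Perm (Fin 6)) _ (by decide) (by decide) v
    have hJ_81 : D (jn ![2,3,5] ![0,1,6]) v = D (jn ![0,1,2] ![3,5,6]) v :=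
      D_perm_pos (jn ![0,1,2] ![3,5,6]) (Equiv.swap (0:Fin 6) 2 * Equiv.swap (1:Fin 6) 3 * Equiv.swap (2:Fin 6) 4 * Equiv.swap (3:Fin 6) 4 : Equiv.Perm (Fin 6)) _ (by decide) (by decide) v
    have hJ_82 : D (jn ![2,3,5] ![0,2,5]) v = 0 :=
      D_dup (jn ![2,3,5] ![0,2,5]) 0 4 (by decide) (by decide) v
    have hJ_83 : D (jn ![2,3,5] ![0,2,6]) v = 0 :=
      D_dup (jn ![2,3,5] ![0,2,6]) 0 4 (by decide) (by decide) v
    have hJ_84 : D (jn ![2,3,5] ![0,3,4]) v = 0 :=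
      D_dup (jn ![2,3,5] ![0,3,4]) 1 4 (by decide) (by decide) v
    have hJ_85 : D (jn ![2,3,5] ![0,3,5]) v = 0 :=
      D_dup (jn ![2,3,5] ![0,3,5]) 1 4 (by decide) (by decide) v
    have hJ_86 : D (jn ![2,3,5] ![0,4,5]) v = 0 :=
      D_dup (jn ![2,3,5] ![0,4,5]) 2 5 (by decide) (by decide) v
    have hJ_87 : D (jn ![2,3,5] ![0,4,6]) v = D (jn ![0,2,3] ![4,5,6]) v :=
      D_perm_pos (jn ![0,2,3] ![4,5,6]) (Equiv.swap (0:Fin 6) 1 * Equiv.swap (1:Fin 6) 2 * Equiv.swap (2:Fin 6) 4 * Equiv.swap (3:Fin 6) 4 : Equiv.Perm (Fin 6)) _ (by decide) (by decide) v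
    have hJ_88 : D (jn ![2,3,5] ![0,5,6]) v = 0 :=
      D_dup (jn ![2,3,5] ![0,5,6]) 2 4 (by decide) (by decide) v
    have hJ_89 : D (jn ![2,3,5] ![1,2,3]) v = 0 :=
      D_dup (jn ![2,3,5] ![1,2,3]) 0 4 (by decide) (by decide) v
    have hJ_90 : D (jn ![2,3,5] ![1,2,4]) v = 0 :=
      D_dup (jn ![2,3,5] ![1,2,4]) 0 4 (by decide) (by decide) v
    have hJ_91 : D (jn ![2,3,5] ![1,2,5]) v = 0 :=
      D_dup (jn ![2,3,5] ![1,2,5]) 0 4 (by decide) (by decide) v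
    have hJ_92 : D (jn ![2,3,5] ![1,2,6]) v = 0 :=
      D_dup (jn ![2,3,5] ![1,2,6]) 0 4 (by decide) (by decide) v
    have hJ_93 : D (jn ![2,3,5] ![1,3,6]) v = 0 :=
      D_dup (jn ![2,3,5] ![1,3,6]) 1 4 (by decide) (by decide) v
    have hJ_94 : D (jn ![2,3,5] ![1,4,5]) v = 0 :=
      D_dup (jn ![2,3,5] ![1,4,5]) 2 5 (by decide) (by decide) v
    have hJ_95 : D (jn ![2,3,5] ![1,4,6]) v = D (jn ![1,2,3] ![4,5,6]) v :=
      D_perm_pos (jn ![1,2,3] ![4,5,6]) (Equiv.swap (0:Fin 6) 1 * Equiv.swap (1:Fin 6) 2 * Equiv.swap (2:Fin 6) 4 * Equiv.swap (3:Fin 6) 4 : Equiv.Perm (Fin 6)) _ (by decide) (by decide) v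
    have hJ_96 : D (jn ![2,3,5] ![2,3,6]) v = 0 :=
      D_dup (jn ![2,3,5] ![2,3,6]) 0 3 (by decide) (by decide) v
    have hJ_97 : D (jn ![2,3,5] ![2,4,5]) v = 0 :=
      D_dup (jn ![2,3,5] ![2,4,5]) 0 3 (by decide) (by decide) v
    have hJ_98 : D (jn ![2,3,5] ![2,5,6]) v = 0 :=
      D_dup (jn ![2,3,5] ![2,5,6]) 0 3 (by decide) (by decide) v
    have hJ_99 : D (jn ![2,3,5] ![3,4,5]) v = 0 :=
      D_dup (jn ![2,3,5] ![3,4,5]) 1 3 (by decide) (by decide) v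
    rw [hJ_0, hJ_1, hJ_2, hJ_3, hJ_4, hJ_5, hJ_6, hJ_7, hJ_8, hJ_9, hJ_10, hJ_11, hJ_12, hJ_13, hJ_14, hJ_15, hJ_16, hJ_17, hJ_18, hJ_19, hJ_20, hJ_21, hJ_22, hJ_23, hJ_24, hJ_25, hJ_26, hJ_27, hJ_28, hJ_29, hJ_30, hJ_31, hJ_32, hJ_33, hJ_34, hJ_35, hJ_36, hJ_37, hJ_38, hJ_39, hJ_40, hJ_41, hJ_42, hJ_43, hJ_44, hJ_45, hJ_46, hJ_47, hJ_48, hJ_49, hJ_50, hJ_51, hJ_52, hJ_53, hJ_54, hJ_55, hJ_56, hJ_57, hJ_58, hJ_59, hJ_60, hJ_61, hJ_62, hJ_63, hJ_64, hJ_65, hJ_66, hJ_67, hJ_68, hJ_69, hJ_70, hJ_71, hJ_72, hJ_73, hJ_74, hJ_75, hJ_76, hJ_77, hJ_78, hJ_79, hJ_80, hJ_81, hJ_82, hJ_83, hJ_84, hJ_85, hJ_86, hJ_87, hJ_88, hJ_89, hJ_90, hJ_91, hJ_92, hJ_93, hJ_94, hJ_95, hJ_96, hJ_97, hJ_98, 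hJ_99]
    linear_combination ((36 * S 6) * D (jn ![0,1,2] ![3,4,5]) v + (-36 * S 5) * D (jn ![0,1,2] ![3,4,6]) v + (36 * S 4) * D (jn ![0,1,2] ![3,5,6]) v + (-72 * S 3) * D (jn ![0,1,2] ![4,5,6]) v + (36 * S 2) * D (jn ![0,1,3] ![4,5,6]) v + (-36 * S 1) * D (jn ![0,2,3] ![4,5,6]) v + (36 * S 0) * D (jn ![1,2,3] ![4,5,6]) v) * hr
  have hw : wedge33 Phi0 (PhiJ S) v = N Phi0 (PhiJ S) v / 36 := rfl
  rw [hw, hnum]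
  ring

/-- For every `S ∈ V`, the 6-form `Φ₀ ∧ Φ_I(S)` vanishes identically; and `Φ₀ ∧ Φ_J(S)`
vanishes identically if and only if `S = 0`. -/
theorem wedge_Phi0_PhiI_PhiJ (S : V7) :
    (∀ v : Fin 6 → V7, wedge33 Phi0 (PhiI S) v = 0) ∧
    ((∀ v : Fin 6 → V7, wedge33 Phi0 (PhiJ S) v = 0) ↔ S = 0) := by
  refine ⟨fun v => formI S v, ?_, ?_⟩
  · intro h
    funext i
    simp only [Pi.zero_apply]
    fin_cases i
    · have hv := h (fun k => Pi.single ((jn ![1,2,3] ![4,5,6]) k) (1:ℝ))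
      rw [formJ] at hv
      rw [D_basis_ne (jn ![1,2,3] ![4,5,6]) (jn ![0,1,2] ![3,4,5]) 5 (by decide)] at hv
      rw [D_basis_ne (jn ![1,2,3] ![4,5,6]) (jn ![0,1,2] ![3,4,6]) 4 (by decide)] at hv
      rw [D_basis_ne (jn ![1,2,3] ![4,5,6]) (jn ![0,1,2] ![3,5,6]) 3 (by decide)] at hv
      rw [D_basis_ne (jn ![1,2,3] ![4,5,6]) (jn ![0,1,2] ![4,5,6]) 2 (by decide)] at hv
      rw [D_basis_ne (jn ![1,2,3] ![4,5,6]) (jn ![0,1,3] ![4,5,6]) 1 (by decide)] at hv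
      rw [D_basis_ne (jn ![1,2,3] ![4,5,6]) (jn ![0,2,3] ![4,5,6]) 0 (by decide)] at hv
      rw [D_basis_self (jn ![1,2,3] ![4,5,6]) (by decide)] at hv
      show S 0 = 0
      linarith
    · have hv := h (fun k => Pi.single ((jn ![0,2,3] ![4,5,6]) k) (1:ℝ))
      rw [formJ] at hv
      rw [D_basis_ne (jn ![0,2,3] ![4,5,6]) (jn ![0,1,2] ![3,4,5]) 5 (by decide)] at hv
      rw [D_basis_ne (jn ![0,2,3] ![4,5,6]) (jn ![0,1,2] ![3,4,6]) 4 (by decide)] at hv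
      rw [D_basis_ne (jn ![0,2,3] ![4,5,6]) (jn ![0,1,2] ![3,5,6]) 3 (by decide)] at hv
      rw [D_basis_ne (jn ![0,2,3] ![4,5,6]) (jn ![0,1,2] ![4,5,6]) 2 (by decide)] at hv
      rw [D_basis_ne (jn ![0,2,3] ![4,5,6]) (jn ![0,1,3] ![4,5,6]) 1 (by decide)] at hv
      rw [D_basis_self (jn ![0,2,3] ![4,5,6]) (by decide)] at hv
      rw [D_basis_ne (jn ![0,2,3] ![4,5,6]) (jn ![1,2,3] ![4,5,6]) 0 (by decide)] at hv
      show S 1 = 0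
      linarith
    · have hv := h (fun k => Pi.single ((jn ![0,1,3] ![4,5,6]) k) (1:ℝ))
      rw [formJ] at hv
      rw [D_basis_ne (jn ![0,1,3] ![4,5,6]) (jn ![0,1,2] ![3,4,5]) 5 (by decide)] at hv
      rw [D_basis_ne (jn ![0,1,3] ![4,5,6]) (jn ![0,1,2] ![3,4,6]) 4 (by decide)] at hv
      rw [D_basis_ne (jn ![0,1,3] ![4,5,6]) (jn ![0,1,2] ![3,5,6]) 3 (by decide)] at hv
      rw [D_basis_ne (jn ![0,1,3] ![4,5,6]) (jn ![0,1,2] ![4,5,6]) 2 (by decide)] at hv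
      rw [D_basis_self (jn ![0,1,3] ![4,5,6]) (by decide)] at hv
      rw [D_basis_ne (jn ![0,1,3] ![4,5,6]) (jn ![0,2,3] ![4,5,6]) 1 (by decide)] at hv
      rw [D_basis_ne (jn ![0,1,3] ![4,5,6]) (jn ![1,2,3] ![4,5,6]) 0 (by decide)] at hv
      show S 2 = 0
      linarith
    · have hv := h (fun k => Pi.single ((jn ![0,1,2] ![4,5,6]) k) (1:ℝ))
      rw [formJ] at hv
      rw [D_basis_ne (jn ![0,1,2] ![4,5,6]) (jn ![0,1,2] ![3,4,5]) 5 (by decide)] at hv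
      rw [D_basis_ne (jn ![0,1,2] ![4,5,6]) (jn ![0,1,2] ![3,4,6]) 4 (by decide)] at hv
      rw [D_basis_ne (jn ![0,1,2] ![4,5,6]) (jn ![0,1,2] ![3,5,6]) 3 (by decide)] at hv
      rw [D_basis_self (jn ![0,1,2] ![4,5,6]) (by decide)] at hv
      rw [D_basis_ne (jn ![0,1,2] ![4,5,6]) (jn ![0,1,3] ![4,5,6]) 2 (by decide)] at hv
      rw [D_basis_ne (jn ![0,1,2] ![4,5,6]) (jn ![0,2,3] ![4,5,6]) 1 (by decide)] at hv
      rw [D_basis_ne (jn ![0,1,2] ![4,5,6]) (jn ![1,2,3] ![4,5,6]) 0 (by decide)] at hv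
      show S 3 = 0
      linarith
    · have hv := h (fun k => Pi.single ((jn ![0,1,2] ![3,5,6]) k) (1:ℝ))
      rw [formJ] at hv
      rw [D_basis_ne (jn ![0,1,2] ![3,5,6]) (jn ![0,1,2] ![3,4,5]) 5 (by decide)] at hv
      rw [D_basis_ne (jn ![0,1,2] ![3,5,6]) (jn ![0,1,2] ![3,4,6]) 4 (by decide)] at hv
      rw [D_basis_self (jn ![0,1,2] ![3,5,6]) (by decide)] at hv
      rw [D_basis_ne (jn ![0,1,2] ![3,5,6]) (jn ![0,1,2] ![4,5,6]) 3 (by decide)] at hv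
      rw [D_basis_ne (jn ![0,1,2] ![3,5,6]) (jn ![0,1,3] ![4,5,6]) 2 (by decide)] at hv
      rw [D_basis_ne (jn ![0,1,2] ![3,5,6]) (jn ![0,2,3] ![4,5,6]) 1 (by decide)] at hv
      rw [D_basis_ne (jn ![0,1,2] ![3,5,6]) (jn ![1,2,3] ![4,5,6]) 0 (by decide)] at hv
      show S 4 = 0
      linarith
    · have hv := h (fun k => Pi.single ((jn ![0,1,2] ![3,4,6]) k) (1:ℝ))
      rw [formJ] at hv
      rw [D_basis_ne (jn ![0,1,2] ![3,4,6]) (jn ![0,1,2] ![3,4,5]) 5 (by decide)] at hv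
      rw [D_basis_self (jn ![0,1,2] ![3,4,6]) (by decide)] at hv
      rw [D_basis_ne (jn ![0,1,2] ![3,4,6]) (jn ![0,1,2] ![3,5,6]) 4 (by decide)] at hv
      rw [D_basis_ne (jn ![0,1,2] ![3,4,6]) (jn ![0,1,2] ![4,5,6]) 3 (by decide)] at hv
      rw [D_basis_ne (jn ![0,1,2] ![3,4,6]) (jn ![0,1,3] ![4,5,6]) 2 (by decide)] at hv
      rw [D_basis_ne (jn ![0,1,2] ![3,4,6]) (jn ![0,2,3] ![4,5,6]) 1 (by decide)] at hv
      rw [D_basis_ne (jn ![0,1,2] ![3,4,6]) (jn ![1,2,3] ![4,5,6]) 0 (by decide)] at hv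
      show S 5 = 0
      linarith
    · have hv := h (fun k => Pi.single ((jn ![0,1,2] ![3,4,5]) k) (1:ℝ))
      rw [formJ] at hv
      rw [D_basis_self (jn ![0,1,2] ![3,4,5]) (by decide)] at hv
      rw [D_basis_ne (jn ![0,1,2] ![3,4,5]) (jn ![0,1,2] ![3,4,6]) 5 (by decide)] at hv
      rw [D_basis_ne (jn ![0,1,2] ![3,4,5]) (jn ![0,1,2] ![3,5,6]) 4 (by decide)] at hv
      rw [D_basis_ne (jn ![0,1,2] ![3,4,5]) (jn ![0,1,2] ![4,5,6]) 3 (by decide)] at hv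
      rw [D_basis_ne (jn ![0,1,2] ![3,4,5]) (jn ![0,1,3] ![4,5,6]) 2 (by decide)] at hv
      rw [D_basis_ne (jn ![0,1,2] ![3,4,5]) (jn ![0,2,3] ![4,5,6]) 1 (by decide)] at hv
      rw [D_basis_ne (jn ![0,1,2] ![3,4,5]) (jn ![1,2,3] ![4,5,6]) 0 (by decide)] at hv
      show S 6 = 0
      linarith
  · intro h v
    subst h
    rw [formJ]
    simp

end
end
end

section
/- For all x, y ∈ V: tr(K_x ∘ K_y) = −6·H₀(x, y). (Thus the bilinear form H_{Φ₀}(x,y) := −(1/6)·tr(z ↦ x × (y × z)) induced by the split cross product determined by Φ₀ coincides with H₀, i.e., Φ₀ is compatible with H₀.) -/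
noncomputable section

noncomputable section

set_option maxHeartbeats 1000000

lemma coord_spec7 (x : V7) (K : V7 →ₗ[ℝ] V7)
    (hK : ∀ u v : V7, H0 (K u) v = Phi0 x u v) (z : V7) :
    K z 0 = Phi0 x z (Pi.single 6 1) ∧ K z 1 = Phi0 x z (Pi.single 4 1) ∧
    K z 2 = Phi0 x z (Pi.single 5 1) ∧ K z 3 = -Phi0 x z (Pi.single 3 1) ∧
    K z 4 = Phi0 x z (Pi.single 1 1) ∧ K z 5 = Phi0 x z (Pi.single 2 1) ∧
    K z 6 = Phi0 x z (Pi.single 0 1) := by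
  have h6 := hK z (Pi.single 6 1)
  have h4 := hK z (Pi.single 4 1)
  have h5 := hK z (Pi.single 5 1)
  have h3 := hK z (Pi.single 3 1)
  have h1 := hK z (Pi.single 1 1)
  have h2 := hK z (Pi.single 2 1)
  have h0 := hK z (Pi.single 0 1)
  simp (config := { decide := true }) only [H0, Pi.single_apply, if_true, if_false,
    mul_one, mul_zero, add_zero, zero_add, sub_zero, zero_sub] at h0 h1 h2 h3 h4 h5 h6
  exact ⟨h6, h4, h5, by linarith, h1, h2, h0⟩

/-- For `x, y ∈ V`, with `K_x` and `K_y` the cross-product maps determined by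
`H₀(K_x u, v) = Φ₀(x, u, v)` and `H₀(K_y u, v) = Φ₀(y, u, v)`, one has
`tr(K_x ∘ K_y) = −6·H₀(x, y)`; that is, the bilinear form
`H_{Φ₀}(x,y) = −(1/6)·tr(z ↦ x × (y × z))` induced by the split cross product determined by
`Φ₀` coincides with `H₀`. -/
theorem trace_crossMap_comp (x y : V7) (Kx Ky : V7 →ₗ[ℝ] V7)
    (hKx : ∀ u v : V7, H0 (Kx u) v = Phi0 x u v)
    (hKy : ∀ u v : V7, H0 (Ky u) v = Phi0 y u v) :
    LinearMap.trace ℝ V7 (Kx ∘ₗ Ky) = -6 * H0 x y := by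
  have htr : LinearMap.trace ℝ V7 (Kx ∘ₗ Ky)
      = ∑ i : Fin 7, Kx (Ky (Pi.single i 1)) i := by
    rw [LinearMap.trace_eq_matrix_trace ℝ (Pi.basisFun ℝ (Fin 7))]
    simp [Matrix.trace, LinearMap.toMatrix_apply, Matrix.diag]
  rw [htr, Fin.sum_univ_seven]
  have cx := coord_spec7 x Kx hKx
  have cy := coord_spec7 y Ky hKy
  rw [(cx (Ky (Pi.single 0 1))).1, (cx (Ky (Pi.single 1 1))).2.1,
    (cx (Ky (Pi.single 2 1))).2.2.1, (cx (Ky (Pi.single 3 1))).2.2.2.1,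
    (cx (Ky (Pi.single 4 1))).2.2.2.2.1, (cx (Ky (Pi.single 5 1))).2.2.2.2.2.1,
    (cx (Ky (Pi.single 6 1))).2.2.2.2.2.2]
  obtain ⟨d00, d01, d02, d03, d04, d05, d06⟩ := cy (Pi.single 0 1)
  obtain ⟨d10, d11, d12, d13, d14, d15, d16⟩ := cy (Pi.single 1 1)
  obtain ⟨d20, d21, d22, d23, d24, d25, d26⟩ := cy (Pi.single 2 1)
  obtain ⟨d30, d31, d32, d33, d34, d35, d36⟩ := cy (Pi.single 3 1)
  obtain ⟨d40, d41, d42, d43, d44, d45, d46⟩ := cy (Pi.single 4 1)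
  obtain ⟨d50, d51, d52, d53, d54, d55, d56⟩ := cy (Pi.single 5 1)
  obtain ⟨d60, d61, d62, d63, d64, d65, d66⟩ := cy (Pi.single 6 1)
  simp (config := { decide := true }) only [Phi0, tripleDet, Pi.single_apply, if_true, if_false,
    mul_one, mul_zero, zero_mul, one_mul, add_zero, zero_add, sub_zero, zero_sub, mul_neg,
    neg_neg, neg_zero, sub_self,
    d00, d01, d02, d03, d04, d05, d06, d10, d11, d12, d13, d14, d15, d16,
    d20, d21, d22, d23, d24, d25, d26, d30, d31, d32, d33, d34, d35, d36,
    d40, d41, d42, d43, d44, d45, d46, d50, d51, d52, d53, d54, d55, d56,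
    d60, d61, d62, d63, d64, d65, d66]
  rw [H0]
  ring_nf
  simp only [show Real.sqrt 2 ^ 2 = 2 from Real.sq_sqrt (by norm_num)]
  ring_nf

end
end
end
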